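/- arXiv:1909.07952 — 8 statements merged into one kernel-verified Lean document; each statement's English description precedes it below -/
import Mathlib

section
/- For a connected graph G on n vertices, th(G) = n (the standard zero forcing throttling number equals the number of vertices) if and only if G does not contain an induced P_4, C_4, or bowtie graph. -/
open SimpleGraph Set Function

namespace ThrotPaper

variable {V : Type*} {W : Type*} {α : Type*}

/-- One simultaneous round of standard zero forcing: a blue vertex forces its
unique white neighbor. -/
def zfStep (G : SimpleGraph V) (B : Set V) : Set V :=
  B ∪ {w | w ∉ B ∧ ∃ u ∈ B, G.Adj u w ∧ ∀ x, G.Adj u x → x ∉ B → x = w}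

/-- `B` is a standard zero forcing set of `G`. -/
def IsZFSet (G : SimpleGraph V) (B : Set V) : Prop :=
  ∃ t, (zfStep G)^[t] B = Set.univ

/-- Standard propagation time of `B` in `G`. -/
noncomputable def zfPt (G : SimpleGraph V) (B : Set V) : ℕ :=
  sInf {t | (zfStep G)^[t] B = Set.univ}

/-- Standard throttling number of `G`. -/
noncomputable def zfTh (G : SimpleGraph V) : ℕ :=
  sInf {n | ∃ B : Set V, IsZFSet G B ∧ n = B.ncard + zfPt G B}

/-- The set `B^(i)` of vertices newly forced at time step `i ≥ 1`. -/
def newBlue (G : SimpleGraph V) (B : Set V) (i : ℕ) : Set V :=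
  (zfStep G)^[i] B \ (zfStep G)^[i - 1] B

/-- `G` contains an induced copy of `X`. -/
def HasInducedCopy (X : SimpleGraph α) (G : SimpleGraph V) : Prop :=
  ∃ f : α ↪ V, ∀ a b, X.Adj a b ↔ G.Adj (f a) (f b)

/-- The path on four vertices. -/
def P4 : SimpleGraph (Fin 4) := SimpleGraph.fromRel (fun i j => (i : ℕ) + 1 = (j : ℕ))

/-- The cycle on four vertices. -/
def C4 : SimpleGraph (Fin 4) := SimpleGraph.fromRel (fun i j => j = i + 1)

/-- The bowtie: two triangles sharing the vertex `0`. -/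
def Bowtie : SimpleGraph (Fin 5) :=
  SimpleGraph.fromRel
    (fun i j => ({i, j} : Set (Fin 5)) ⊆ {0, 1, 2} ∨ ({i, j} : Set (Fin 5)) ⊆ {0, 3, 4})

/-- The disjoint union of two edges. -/
def TwoK2 : SimpleGraph (Fin 4) :=
  SimpleGraph.fromRel (fun i j => (i = 0 ∧ j = 1) ∨ (i = 2 ∧ j = 3))

/-- `x` and `y` are white and lie in the same component of `G - B`. -/
def whiteConn (G : SimpleGraph V) (B : Set V) (x y : V) : Prop :=
  ∃ (hx : x ∈ Bᶜ) (hy : y ∈ Bᶜ), (G.induce Bᶜ).Reachable ⟨x, hx⟩ ⟨y, hy⟩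

/-- One simultaneous round of positive semidefinite zero forcing. -/
def psdStep (G : SimpleGraph V) (B : Set V) : Set V :=
  B ∪ {w | w ∉ B ∧ ∃ u ∈ B, G.Adj u w ∧
    ∀ x, G.Adj u x → x ∉ B → whiteConn G B x w → x = w}

/-- `B` is a PSD zero forcing set of `G`. -/
def IsPSDSet (G : SimpleGraph V) (B : Set V) : Prop :=
  ∃ t, (psdStep G)^[t] B = Set.univ

/-- PSD propagation time. -/
noncomputable def psdPt (G : SimpleGraph V) (B : Set V) : ℕ :=
  sInf {t | (psdStep G)^[t] B = Set.univ}

/-- PSD throttling number. -/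
noncomputable def psdTh (G : SimpleGraph V) : ℕ :=
  sInf {n | ∃ B : Set V, IsPSDSet G B ∧ n = B.ncard + psdPt G B}

/-- The blue set at time `t` when performing exactly the PSD forces in `F`,
as early as possible. -/
def psdBlueAt (G : SimpleGraph V) (F : Set (V × V)) (B : Set V) : ℕ → Set V
  | 0 => B
  | t + 1 =>
    psdBlueAt G F B t ∪ {w | w ∉ psdBlueAt G F B t ∧ ∃ u ∈ psdBlueAt G F B t,
      (u, w) ∈ F ∧ G.Adj u w ∧
      ∀ x, G.Adj u x → x ∉ psdBlueAt G F B t →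
        whiteConn G (psdBlueAt G F B t) x w → x = w}

/-- PSD propagation time of a set of forces `F`. -/
noncomputable def psdPtF (G : SimpleGraph V) (F : Set (V × V)) (B : Set V) : ℕ :=
  sInf {t | psdBlueAt G F B t = Set.univ}

/-- `F` is a set of PSD forces of `B` in `G` (every vertex outside `B` has a
unique forcer and the forces color the whole graph). -/
def IsPSDForceSet (G : SimpleGraph V) (F : Set (V × V)) (B : Set V) : Prop :=
  (∀ w ∉ B, ∃! u, (u, w) ∈ F) ∧ (∀ p ∈ F, p.2 ∉ B ∧ p.1 ≠ p.2) ∧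
    ∃ t, psdBlueAt G F B t = Set.univ

/-- `G'` is obtained from `G` by contracting the edge `uv`, via the
identification map `φ`. -/
def IsEdgeContraction (G : SimpleGraph V) (u v : V) (G' : SimpleGraph W) (φ : V → W) : Prop :=
  Function.Surjective φ ∧ φ u = φ v ∧
    (∀ x y : V, φ x = φ y → x ≠ y → (x = u ∧ y = v) ∨ (x = v ∧ y = u)) ∧
    (∀ a b : W, G'.Adj a b ↔ a ≠ b ∧ ∃ x y, G.Adj x y ∧ φ x = a ∧ φ y = b)

/-- One round of `⌊Z₊⌋` forcing (PSD forcing with hopping); a state consists of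
the blue set together with, for each vertex, the set of white vertices of
components with respect to which it is inactive. -/
def zpfRound (G : SimpleGraph V) (s s' : Set V × (V → Set V)) : Prop :=
  ∃ F : Set (V × V),
    (∀ p ∈ F, p.1 ∈ s.1 ∧ p.2 ∉ s.1 ∧ p.2 ∉ s.2 p.1 ∧
      ∀ x, G.Adj p.1 x → x ∉ s.1 → whiteConn G s.1 x p.2 → x = p.2) ∧
    (∀ p ∈ F, ∀ q ∈ F, p.2 = q.2 → p = q) ∧
    (∀ p ∈ F, ∀ q ∈ F, p.1 = q.1 → whiteConn G s.1 p.2 q.2 → p = q) ∧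
    s'.1 = s.1 ∪ {w | ∃ u, (u, w) ∈ F} ∧
    s'.2 = fun u => s.2 u ∪ {x | ∃ w, (u, w) ∈ F ∧ whiteConn G s.1 x w}

/-- From state `s` every vertex can be colored blue in `t` rounds of `⌊Z₊⌋` forcing. -/
def zpfReach (G : SimpleGraph V) : ℕ → Set V × (V → Set V) → Prop
  | 0, s => s.1 = Set.univ
  | t + 1, s => ∃ s', zpfRound G s s' ∧ zpfReach G t s'

/-- Throttling number for the minor monotone floor of PSD zero forcing. -/
noncomputable def zpfTh (G : SimpleGraph V) : ℕ :=
  sInf {n | ∃ (B : Set V) (t : ℕ), zpfReach G t (B, fun _ => ∅) ∧ n = B.ncard + t}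

/-- `G` is an `a`-accelerator. -/
def IsAccelerator (G : SimpleGraph V) (a : ℕ) : Prop :=
  ∃ S T : Set V, S ∩ T = ∅ ∧ S ∪ T = Set.univ ∧ S.ncard = a + 1 ∧ T.ncard = a + 1 ∧
    ∃ f : V → V, Set.BijOn f S T ∧ ∀ s ∈ S, ∀ t ∈ T, (G.Adj s t ↔ f s = t)

/-- The sets `S i`, `T i` witness that `G` is an `(a 0, …, a (r-1))`-accelerator graph. -/
def MultiAccelWitness (G : SimpleGraph V) {r : ℕ} (a : Fin r → ℕ)
    (S T : Fin r → Set V) : Prop :=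
  (⋃ i, S i ∪ T i) = Set.univ ∧
  (∀ i, (S i).ncard = a i + 1) ∧ (∀ i, (T i).ncard = a i + 1) ∧
  (∀ i j, i ≠ j → S i ∩ S j = ∅) ∧
  (∀ i j, i ≠ j → T i ∩ T j = ∅) ∧
  (∀ i j : Fin r, (i : ℕ) + 1 ≠ (j : ℕ) → T i ∩ S j = ∅) ∧
  (∀ i, ∃ f : V → V, Set.BijOn f (S i) (T i) ∧
    ∀ s ∈ S i, ∀ t ∈ T i, (G.Adj s t ↔ f s = t)) ∧
  (∀ u v, G.Adj u v →
    (∃ i, (u ∈ S i ∧ v ∈ T i) ∨ (v ∈ S i ∧ u ∈ T i) ∨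
      (u ∈ S i ∧ v ∈ S i) ∨ (u ∈ T i ∧ v ∈ T i)) ∨
    (∃ i j : Fin r, j < i ∧
      ((u ∈ S i ∧ (∀ p : Fin r, (p : ℕ) + 1 = (i : ℕ) → u ∉ T p) ∧ v ∈ S j ∪ T j) ∨
       (v ∈ S i ∧ (∀ p : Fin r, (p : ℕ) + 1 = (i : ℕ) → v ∉ T p) ∧ u ∈ S j ∪ T j)))) ∧
  (∀ i j : Fin r, (i : ℕ) + 1 = (j : ℕ) → ∀ s ∈ S j, ∃ t ∈ T i, G.Adj s t)

/-- `X` belongs to the family `𝒢ₖ`: it is an `(a₁,…,a_r)`-accelerator graph for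
some composition `a₁ + ⋯ + a_r = k + 1`. -/
def InAccelFamily (k : ℕ) (X : SimpleGraph α) : Prop :=
  ∃ (r : ℕ) (a : Fin r → ℕ) (S T : Fin r → Set α),
    1 ≤ r ∧ (∀ i, 1 ≤ a i) ∧ (∑ i, a i) = k + 1 ∧ MultiAccelWitness X a S T

/-- `G` is a minor of `H` (branch set definition). -/
def IsMinor (G : SimpleGraph V) (H : SimpleGraph W) : Prop :=
  ∃ f : V → Set W, (∀ v, (f v).Nonempty) ∧ (Pairwise fun u v => Disjoint (f u) (f v)) ∧
    (∀ v, (H.induce (f v)).Connected) ∧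
    ∀ u v, G.Adj u v → ∃ x ∈ f u, ∃ y ∈ f v, H.Adj x y

/-- The complete `k`-ary tree of height `b`, with vertices the lists over
`Fin k` of length at most `b` (children are obtained by prepending a letter). -/
def kAryTree (k b : ℕ) : SimpleGraph {l : List (Fin k) // l.length ≤ b} :=
  SimpleGraph.fromRel
    (fun x y => ∃ a : Fin k, (x : List (Fin k)) = a :: (y : List (Fin k)))

/-- `G` is obtained from `K_a □ T_{k,b}` by contracting tree edges and/or
deleting complete edges, via the quotient map `φ`. -/
def ObtainedByCTDC {a k b : ℕ} (G : SimpleGraph V)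
    (φ : Fin a × {l : List (Fin k) // l.length ≤ b} → V) : Prop :=
  Function.Surjective φ ∧
  (∀ p q, φ p = φ q → p.1 = q.1 ∧
    Relation.ReflTransGen
      (fun x y => φ x = φ y ∧ x.1 = y.1 ∧ (kAryTree k b).Adj x.2 y.2) p q) ∧
  (∀ p q, p.1 = q.1 → (kAryTree k b).Adj p.2 q.2 → φ p ≠ φ q → G.Adj (φ p) (φ q)) ∧
  (∀ u v, G.Adj u v → ∃ p q, φ p = u ∧ φ q = v ∧
    ((p.1 = q.1 ∧ (kAryTree k b).Adj p.2 q.2) ∨ (p.2 = q.2 ∧ p.1 ≠ q.1)))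


section Aux
variable {V : Type*}

lemma hasP4_of {G : SimpleGraph V} {a b c d : V}
    (hab : G.Adj a b) (hbc : G.Adj b c) (hcd : G.Adj c d)
    (hac : ¬G.Adj a c) (had : ¬G.Adj a d) (hbd : ¬G.Adj b d)
    (nac : a ≠ c) (nad : a ≠ d) (nbd : b ≠ d) :
    HasInducedCopy P4 G := by
  have hba := hab.symm; have hcb := hbc.symm; have hdc := hcd.symm
  have hca : ¬G.Adj c a := fun h => hac h.symm
  have hda : ¬G.Adj d a := fun h => had h.symm
  have hdb : ¬G.Adj d b := fun h => hbd h.symm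
  refine ⟨⟨![a,b,c,d], ?_⟩, ?_⟩
  · intro i j hij
    fin_cases i <;> fin_cases j <;>
      simp_all [hab.ne, hbc.ne, hcd.ne, hab.ne', hbc.ne', hcd.ne', nac, nad, nbd,
        nac.symm, nad.symm, nbd.symm]
  · intro i j
    change P4.Adj i j ↔ G.Adj (![a,b,c,d] i) (![a,b,c,d] j)
    fin_cases i <;> fin_cases j <;>
      (try simp_all [P4, SimpleGraph.fromRel_adj, G.irrefl, Fin.ext_iff]) <;> decide

lemma hasC4_of {G : SimpleGraph V} {a b c d : V}
    (hab : G.Adj a b) (hbc : G.Adj b c) (hcd : G.Adj c d) (hda : G.Adj d a)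
    (hac : ¬G.Adj a c) (hbd : ¬G.Adj b d) (nac : a ≠ c) (nbd : b ≠ d) :
    HasInducedCopy C4 G := by
  have hba := hab.symm; have hcb := hbc.symm; have hdc := hcd.symm; have had := hda.symm
  have hca : ¬G.Adj c a := fun h => hac h.symm
  have hdb : ¬G.Adj d b := fun h => hbd h.symm
  refine ⟨⟨![a,b,c,d], ?_⟩, ?_⟩
  · intro i j hij
    fin_cases i <;> fin_cases j <;>
      simp_all [hab.ne, hbc.ne, hcd.ne, hda.ne, hab.ne', hbc.ne', hcd.ne', hda.ne',
        nac, nbd, nac.symm, nbd.symm]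
  · intro i j
    change C4.Adj i j ↔ G.Adj (![a,b,c,d] i) (![a,b,c,d] j)
    fin_cases i <;> fin_cases j <;>
      (try simp_all [C4, SimpleGraph.fromRel_adj, G.irrefl, Fin.ext_iff]) <;> decide


lemma bowtie_adj (i j : Fin 5) : Bowtie.Adj i j ↔ i ≠ j ∧
    (((i = 0 ∨ i = 1 ∨ i = 2) ∧ (j = 0 ∨ j = 1 ∨ j = 2)) ∨
     ((i = 0 ∨ i = 3 ∨ i = 4) ∧ (j = 0 ∨ j = 3 ∨ j = 4))) := by
  simp only [Bowtie, SimpleGraph.fromRel_adj, Set.insert_subset_iff,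
    Set.singleton_subset_iff, Set.mem_insert_iff, Set.mem_singleton_iff]
  fin_cases i <;> fin_cases j <;> decide

lemma hasBowtie_of {G : SimpleGraph V} {v a b c d : V}
    (hva : G.Adj v a) (hvb : G.Adj v b) (hvc : G.Adj v c) (hvd : G.Adj v d)
    (hab : G.Adj a b) (hcd : G.Adj c d)
    (hac : ¬G.Adj a c) (had : ¬G.Adj a d) (hbc : ¬G.Adj b c) (hbd : ¬G.Adj b d)
    (nac : a ≠ c) (nad : a ≠ d) (nbc : b ≠ c) (nbd : b ≠ d) :
    HasInducedCopy Bowtie G := by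
  have h1 := hva.symm; have h2 := hvb.symm; have h3 := hvc.symm; have h4 := hvd.symm
  have hba := hab.symm; have hdc := hcd.symm
  have hca : ¬G.Adj c a := fun h => hac h.symm
  have hda : ¬G.Adj d a := fun h => had h.symm
  have hcb : ¬G.Adj c b := fun h => hbc h.symm
  have hdb : ¬G.Adj d b := fun h => hbd h.symm
  refine ⟨⟨![v,a,b,c,d], ?_⟩, ?_⟩
  · intro i j hij
    fin_cases i <;> fin_cases j <;>
      simp_all [hva.ne, hvb.ne, hvc.ne, hvd.ne, hva.ne', hvb.ne', hvc.ne', hvd.ne',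
        hab.ne, hcd.ne, hab.ne', hcd.ne', nac, nad, nbc, nbd,
        nac.symm, nad.symm, nbc.symm, nbd.symm]
  · intro i j
    change Bowtie.Adj i j ↔ G.Adj (![v,a,b,c,d] i) (![v,a,b,c,d] j)
    rw [bowtie_adj]
    fin_cases i <;> fin_cases j <;>
      (try simp_all [G.irrefl, Fin.ext_iff]) <;> decide

def Config (G : SimpleGraph V) : Prop :=
  ∃ u₁ w₁ u₂ w₂ : V, u₁ ≠ u₂ ∧ u₁ ≠ w₂ ∧ u₂ ≠ w₁ ∧ w₁ ≠ w₂ ∧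
    G.Adj u₁ w₁ ∧ G.Adj u₂ w₂ ∧ ¬G.Adj u₁ w₂ ∧ ¬G.Adj u₂ w₁

lemma config_of_copies {G : SimpleGraph V}
    (h : HasInducedCopy P4 G ∨ HasInducedCopy C4 G ∨ HasInducedCopy Bowtie G) :
    Config G := by
  rcases h with ⟨f, hf⟩ | ⟨f, hf⟩ | ⟨f, hf⟩
  · -- P4: u1 = f 1, w1 = f 0, u2 = f 2, w2 = f 3
    refine ⟨f 1, f 0, f 2, f 3, by simp [f.injective.ne_iff], by simp [f.injective.ne_iff],
      by simp [f.injective.ne_iff], by simp [f.injective.ne_iff], ?_, ?_, ?_, ?_⟩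
    · exact ((hf 0 1).mp (by simp only [P4, SimpleGraph.fromRel_adj]; decide : P4.Adj 0 1)).symm
    · exact (hf 2 3).mp (by simp only [P4, SimpleGraph.fromRel_adj]; decide : P4.Adj 2 3)
    · exact fun h => (by simp only [P4, SimpleGraph.fromRel_adj]; decide : ¬ P4.Adj 1 3) ((hf 1 3).mpr h)
    · exact fun h => (by simp only [P4, SimpleGraph.fromRel_adj]; decide : ¬ P4.Adj 2 0) ((hf 2 0).mpr h)
  · refine ⟨f 1, f 0, f 2, f 3, by simp [f.injective.ne_iff], by simp [f.injective.ne_iff],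
      by simp [f.injective.ne_iff], by simp [f.injective.ne_iff], ?_, ?_, ?_, ?_⟩
    · exact ((hf 0 1).mp (by simp only [C4, SimpleGraph.fromRel_adj]; decide : C4.Adj 0 1)).symm
    · exact (hf 2 3).mp (by simp only [C4, SimpleGraph.fromRel_adj]; decide : C4.Adj 2 3)
    · exact fun h => (by simp only [C4, SimpleGraph.fromRel_adj]; decide : ¬ C4.Adj 1 3) ((hf 1 3).mpr h)
    · exact fun h => (by simp only [C4, SimpleGraph.fromRel_adj]; decide : ¬ C4.Adj 2 0) ((hf 2 0).mpr h)
  · refine ⟨f 1, f 2, f 3, f 4, by simp [f.injective.ne_iff], by simp [f.injective.ne_iff],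
      by simp [f.injective.ne_iff], by simp [f.injective.ne_iff], ?_, ?_, ?_, ?_⟩
    · exact (hf 1 2).mp (by rw [bowtie_adj]; decide)
    · exact (hf 3 4).mp (by rw [bowtie_adj]; decide)
    · exact fun h => (by rw [bowtie_adj]; decide : ¬ Bowtie.Adj 1 4) ((hf 1 4).mpr h)
    · exact fun h => (by rw [bowtie_adj]; decide : ¬ Bowtie.Adj 3 2) ((hf 3 2).mpr h)

lemma exists_common_nbr {G : SimpleGraph V} (hP4 : ¬ HasInducedCopy P4 G) :
    ∀ {x y : V}, G.Walk x y → x ≠ y → ¬ G.Adj x y → ∃ v, G.Adj x v ∧ G.Adj v y := by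
  intro x y p
  induction p with
  | nil => exact fun h _ => absurd rfl h
  | @cons x w y h q ih =>
    intro hxy hadj
    by_cases hwy : w = y
    · exact absurd (hwy ▸ h) hadj
    by_cases hwy2 : G.Adj w y
    · exact ⟨w, h, hwy2⟩
    obtain ⟨v, hwv, hvy⟩ := ih hwy hwy2
    by_cases hxv : G.Adj x v
    · exact ⟨v, hxv, hvy⟩
    · have hxv' : x ≠ v := fun he => hadj (he ▸ hvy)
      exact absurd (hasP4_of h hwv hvy hxv hadj hwy2 hxv' hxy hwy) hP4

lemma bowtie_of_2K2 {G : SimpleGraph V} (hG : G.Connected)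
    (hP4 : ¬ HasInducedCopy P4 G) (hC4 : ¬ HasInducedCopy C4 G)
    {a b c d : V} (hab : G.Adj a b) (hcd : G.Adj c d)
    (hac : ¬G.Adj a c) (had : ¬G.Adj a d) (hbc : ¬G.Adj b c) (hbd : ¬G.Adj b d)
    (nac : a ≠ c) (nad : a ≠ d) (nbc : b ≠ c) (nbd : b ≠ d) :
    HasInducedCopy Bowtie G := by
  obtain ⟨v, hav, hvc⟩ := exists_common_nbr hP4 ((hG a c).some) nac hac
  have hvb : v ≠ b := fun he => hbc (he ▸ hvc)
  have hvd : v ≠ d := fun he => had (he ▸ hav)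
  by_cases h1 : G.Adj v b
  · by_cases h2 : G.Adj v d
    · exact hasBowtie_of hav.symm h1 hvc h2 hab hcd hac had hbc hbd nac nad nbc nbd
    · -- P4 : d - c - v - a
      exact absurd (hasP4_of hcd.symm hvc.symm hav.symm
        (fun h => h2 h.symm) (fun h => had h.symm) (fun h => hac h.symm)
        hvd.symm nad.symm nac.symm) hP4
  · -- P4 : b - a - v - c
    exact absurd (hasP4_of hab.symm hav hvc (fun h => h1 h.symm) hbc hac
      hvb.symm nbc nac) hP4

lemma not_config {G : SimpleGraph V} (hG : G.Connected)
    (h4 : ¬HasInducedCopy P4 G) (hc : ¬HasInducedCopy C4 G)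
    (hb : ¬HasInducedCopy Bowtie G) : ¬ Config G := by
  rintro ⟨u1, w1, u2, w2, n1, n2, n3, n4, a1, a2, na1, na2⟩
  by_cases e1 : G.Adj u1 u2 <;> by_cases e2 : G.Adj w1 w2
  · -- C4 : w1 - u1 - u2 - w2 - w1
    exact hc (hasC4_of a1.symm e1 a2 e2.symm (fun h => na2 h.symm) na1 (Ne.symm n3) n2)
  · -- P4 : w1 - u1 - u2 - w2
    exact h4 (hasP4_of a1.symm e1 a2 (fun h => na2 h.symm) e2 na1 (Ne.symm n3) n4 n2)
  · -- P4 : u1 - w1 - w2 - u2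
    exact h4 (hasP4_of a1 e2 a2.symm na1 e1 (fun h => na2 h.symm) n2 n1 (Ne.symm n3))
  · exact hb (bowtie_of_2K2 hG h4 hc a1 a2 e1 na1 (fun h => na2 h.symm) e2
      n1 n2 (Ne.symm n3) n4)

section Count
variable [Fintype V] {G : SimpleGraph V}

lemma zfStep_diff_subsingleton (hC : ¬ Config G) (B : Set V) :
    (zfStep G B \ B).Subsingleton := by
  rintro w1 ⟨hw1s, hw1⟩ w2 ⟨hw2s, hw2⟩
  by_contra hne
  rcases (Set.mem_union _ _ _).mp hw1s with h | ⟨_, u1, hu1B, ha1, hc1⟩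
  · exact hw1 h
  rcases (Set.mem_union _ _ _).mp hw2s with h | ⟨_, u2, hu2B, ha2, hc2⟩
  · exact hw2 h
  refine hC ⟨u1, w1, u2, w2, ?_, ?_, ?_, hne, ha1, ha2, ?_, ?_⟩
  · rintro rfl
    exact hne (hc1 w2 ha2 hw2).symm
  · rintro rfl; exact hw2 hu1B
  · rintro rfl; exact hw1 hu2B
  · exact fun h => hne (hc1 w2 h hw2).symm
  · exact fun h => hne (hc2 w1 h hw1)

lemma ncard_zfStep_le (hC : ¬ Config G) (B : Set V) :
    (zfStep G B).ncard ≤ B.ncard + 1 := by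
  have hsub : B ⊆ zfStep G B := Set.subset_union_left
  have h1 : zfStep G B = B ∪ (zfStep G B \ B) := (Set.union_diff_cancel hsub).symm
  calc (zfStep G B).ncard = (B ∪ (zfStep G B \ B)).ncard := by rw [← h1]
    _ ≤ B.ncard + (zfStep G B \ B).ncard := Set.ncard_union_le _ _
    _ ≤ B.ncard + 1 := by
        have := (Set.ncard_le_one_iff (Set.toFinite _)).mpr
          (fun ha hb => zfStep_diff_subsingleton hC B ha hb)
        omega

lemma ncard_iterate_le (hC : ¬ Config G) (B : Set V) (t : ℕ) :
    ((zfStep G)^[t] B).ncard ≤ B.ncard + t := by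
  induction t with
  | zero => simp
  | succ t ih =>
    rw [Function.iterate_succ_apply']
    calc (zfStep G ((zfStep G)^[t] B)).ncard ≤ ((zfStep G)^[t] B).ncard + 1 :=
          ncard_zfStep_le hC _
      _ ≤ B.ncard + t + 1 := by omega

lemma th_le_card (G : SimpleGraph V) : zfTh G ≤ Fintype.card V := by
  apply Nat.sInf_le
  refine ⟨Set.univ, ⟨0, rfl⟩, ?_⟩
  have hpt : zfPt G (Set.univ : Set V) = 0 :=
    Nat.sInf_eq_zero.mpr (Or.inl (by exact rfl))
  rw [hpt, Set.ncard_univ, Nat.card_eq_fintype_card]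
  simp

lemma card_le_th (hC : ¬ Config G) : Fintype.card V ≤ zfTh G := by
  have hne : {n | ∃ B : Set V, IsZFSet G B ∧ n = B.ncard + zfPt G B}.Nonempty :=
    ⟨(Set.univ : Set V).ncard + zfPt G Set.univ, Set.univ, ⟨0, rfl⟩, rfl⟩
  obtain ⟨B, hB, hEq⟩ := Nat.sInf_mem hne
  have hpt : (zfStep G)^[zfPt G B] B = Set.univ := Nat.sInf_mem hB
  have h1 := ncard_iterate_le hC B (zfPt G B)
  rw [hpt, Set.ncard_univ, Nat.card_eq_fintype_card] at h1
  unfold zfTh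
  omega

lemma th_lt_of_config (hCfg : Config G) : zfTh G < Fintype.card V := by
  obtain ⟨u1, w1, u2, w2, n1, n2, n3, n4, a1, a2, na1, na2⟩ := hCfg
  set B : Set V := ({w1, w2} : Set V)ᶜ with hBdef
  have hforce : ∀ w u, w ∈ ({w1, w2} : Set V) → u ∉ ({w1, w2} : Set V) → G.Adj u w →
      (∀ x, G.Adj u x → x ∈ ({w1, w2} : Set V) → x = w) → w ∈ zfStep G B := by
    intro w u hw hu hadj hcond
    exact Set.mem_union_right _ ⟨fun hcontra => hcontra hw, u, hu, hadj,
      fun x hx hxB => hcond x hx (not_not.mp hxB)⟩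
  have step1 : zfStep G B = Set.univ := by
    apply Set.eq_univ_of_forall
    intro x
    by_cases hx : x ∈ ({w1, w2} : Set V)
    · rcases Set.mem_insert_iff.mp hx with rfl | hx
      · refine hforce x u1 (Set.mem_insert _ _) ?_ a1 ?_
        · simp only [Set.mem_insert_iff, Set.mem_singleton_iff]
          push_neg
          exact ⟨a1.ne, n2⟩
        · intro y hy hyB
          rcases Set.mem_insert_iff.mp hyB with rfl | hyB
          · rfl
          · rw [Set.mem_singleton_iff] at hyB; subst hyB; exact absurd hy na1
      · rw [Set.mem_singleton_iff] at hx; subst hx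
        refine hforce x u2 (Set.mem_insert_of_mem _ rfl) ?_ a2 ?_
        · simp only [Set.mem_insert_iff, Set.mem_singleton_iff]
          push_neg
          exact ⟨n3, a2.ne⟩
        · intro y hy hyB
          rcases Set.mem_insert_iff.mp hyB with rfl | hyB
          · exact absurd hy na2
          · rw [Set.mem_singleton_iff] at hyB; exact hyB
    · exact Set.mem_union_left _ hx
  have hZF : IsZFSet G B := ⟨1, by rw [Function.iterate_one, step1]⟩
  have hpt : zfPt G B ≤ 1 := Nat.sInf_le (by rw [Set.mem_setOf_eq, Function.iterate_one, step1])
  have hth : zfTh G ≤ B.ncard + zfPt G B := Nat.sInf_le ⟨B, hZF, rfl⟩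
  have hcard : ({w1, w2} : Set V).ncard + B.ncard = Fintype.card V := by
    rw [hBdef, Set.ncard_add_ncard_compl, Nat.card_eq_fintype_card]
  rw [Set.ncard_pair n4] at hcard
  omega

end Count

end Aux

/-- For a connected graph `G` on `n` vertices, `th(G) = n` iff
`G` has no induced `P₄`, `C₄`, or bowtie. -/
theorem stmt0 {V : Type*} [Fintype V] (G : SimpleGraph V) (hG : G.Connected) :
    zfTh G = Fintype.card V ↔
      ¬ HasInducedCopy P4 G ∧ ¬ HasInducedCopy C4 G ∧ ¬ HasInducedCopy Bowtie G := by
  constructor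
  · intro hth
    refine ⟨fun h => ?_, fun h => ?_, fun h => ?_⟩ <;>
    · have hcfg := config_of_copies (V := V) (by tauto)
      have := th_lt_of_config (G := G) hcfg
      omega
  · rintro ⟨h4, hc, hb⟩
    exact le_antisymm (th_le_card G) (card_le_th (not_config hG h4 hc hb))

end ThrotPaper
end

section
/- If a graph G contains an induced subgraph that is P_4, C_4, or the bowtie graph, then th(G) ≤ |V(G)| − 1. -/
open SimpleGraph Set Function

namespace ThrotPaper

variable {V : Type*} {W : Type*} {α : Type*}

lemma key {V : Type*} [Fintype V] (G : SimpleGraph V) (x y u v : V)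
    (hxy : x ≠ y) (hux : u ≠ x) (huy : u ≠ y) (hvx : v ≠ x) (hvy : v ≠ y)
    (aux : G.Adj u x) (nuy : ¬ G.Adj u y) (avy : G.Adj v y) (nvx : ¬ G.Adj v x) :
    zfTh G ≤ Fintype.card V - 1 := by
  set B : Set V := ({x, y} : Set V)ᶜ with hB
  have hstep : zfStep G B = Set.univ := by
    ext w
    simp only [Set.mem_univ, iff_true]
    by_cases hw : w ∈ B
    · exact Or.inl hw
    · right
      have hw' : w = x ∨ w = y := by
        by_contra hc
        push_neg at hc
        exact hw (by simp [hB, hc.1, hc.2])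
      refine ⟨hw, ?_⟩
      rcases hw' with rfl | rfl
      · refine ⟨u, by simp [hB, hux, huy], aux, fun z hz hz' => ?_⟩
        have : z = w ∨ z = y := by
          by_contra hc; push_neg at hc; exact hz' (by simp [hB, hc.1, hc.2])
        rcases this with rfl | rfl
        · rfl
        · exact absurd hz nuy
      · refine ⟨v, by simp [hB, hvx, hvy], avy, fun z hz hz' => ?_⟩
        have : z = x ∨ z = w := by
          by_contra hc; push_neg at hc; exact hz' (by simp [hB, hc.1, hc.2])
        rcases this with rfl | rfl
        · exact absurd hz nvx
        · rfl
  have hit : (zfStep G)^[1] B = Set.univ := by simpa using hstep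
  have hzf : IsZFSet G B := ⟨1, hit⟩
  have hpt : zfPt G B ≤ 1 := Nat.sInf_le hit
  have hcard : B.ncard = Fintype.card V - 2 := by
    have h1 : ({x, y} : Set V).ncard = 2 := Set.ncard_pair hxy
    have h2 : ({x, y} : Set V).ncard + B.ncard = Nat.card V :=
      Set.ncard_add_ncard_compl _
    have h3 : Nat.card V = Fintype.card V := Nat.card_eq_fintype_card
    omega
  have h2le : 2 ≤ Fintype.card V := Fintype.one_lt_card_iff_nontrivial.mpr ⟨⟨x, y, hxy⟩⟩
  have hth : zfTh G ≤ B.ncard + zfPt G B := Nat.sInf_le ⟨B, hzf, rfl⟩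
  omega

/-- An induced `P₄`, `C₄`, or bowtie forces `th(G) ≤ |V(G)| - 1`. -/
theorem stmt1 {V : Type*} [Fintype V] (G : SimpleGraph V)
    (h : HasInducedCopy P4 G ∨ HasInducedCopy C4 G ∨ HasInducedCopy Bowtie G) :
    zfTh G ≤ Fintype.card V - 1 := by
  rcases h with ⟨f, hf⟩ | ⟨f, hf⟩ | ⟨f, hf⟩
  · exact key G (f 0) (f 3) (f 1) (f 2)
      (f.injective.ne (by decide)) (f.injective.ne (by decide))
      (f.injective.ne (by decide)) (f.injective.ne (by decide))
      (f.injective.ne (by decide))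
      ((hf 1 0).mp (by simp [P4, SimpleGraph.fromRel_adj]; try decide))
      (fun h' => (by simp [P4, SimpleGraph.fromRel_adj]; try decide : ¬ P4.Adj 1 3) ((hf 1 3).mpr h'))
      ((hf 2 3).mp (by simp [P4, SimpleGraph.fromRel_adj]; try decide))
      (fun h' => (by simp [P4, SimpleGraph.fromRel_adj]; try decide : ¬ P4.Adj 2 0) ((hf 2 0).mpr h'))
  · exact key G (f 0) (f 1) (f 3) (f 2)
      (f.injective.ne (by decide)) (f.injective.ne (by decide))
      (f.injective.ne (by decide)) (f.injective.ne (by decide))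
      (f.injective.ne (by decide))
      ((hf 3 0).mp (by simp [C4, SimpleGraph.fromRel_adj]; try decide))
      (fun h' => (by simp [C4, SimpleGraph.fromRel_adj]; try decide : ¬ C4.Adj 3 1) ((hf 3 1).mpr h'))
      ((hf 2 1).mp (by simp [C4, SimpleGraph.fromRel_adj]; try decide))
      (fun h' => (by simp [C4, SimpleGraph.fromRel_adj]; try decide : ¬ C4.Adj 2 0) ((hf 2 0).mpr h'))
  · exact key G (f 1) (f 3) (f 2) (f 4)
      (f.injective.ne (by decide)) (f.injective.ne (by decide))
      (f.injective.ne (by decide)) (f.injective.ne (by decide))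
      (f.injective.ne (by decide))
      ((hf 2 1).mp (by simp [Bowtie, SimpleGraph.fromRel_adj, Set.subset_def]; try decide))
      (fun h' => (by simp [Bowtie, SimpleGraph.fromRel_adj, Set.subset_def]; try decide : ¬ Bowtie.Adj 2 3) ((hf 2 3).mpr h'))
      ((hf 4 3).mp (by simp [Bowtie, SimpleGraph.fromRel_adj, Set.subset_def]; try decide))
      (fun h' => (by simp [Bowtie, SimpleGraph.fromRel_adj, Set.subset_def]; try decide : ¬ Bowtie.Adj 4 1) ((hf 4 1).mpr h'))


end ThrotPaper
end

section
/- For a fixed non-negative integer k, the property 'th(G) ≥ |V(G)| − k' is closed under induced supergraphs: if G is an induced subgraph of H and th(G) < |V(G)| − k, then th(H) < |V(H)| − k. Consequently the class of graphs G with th(G) ≥ |V(G)| − k is characterized by a family of forbidden induced subgraphs. -/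
open SimpleGraph Set Function

namespace ThrotPaper

variable {V : Type*} {W : Type*} {α : Type*}

lemma subset_zfStep (G : SimpleGraph V) (B : Set V) : B ⊆ zfStep G B :=
  Set.subset_union_left

lemma zfStep_mono (G : SimpleGraph V) {S T : Set V} (h : S ⊆ T) :
    zfStep G S ⊆ zfStep G T := by
  intro w hw
  simp only [zfStep, Set.mem_union, Set.mem_setOf_eq] at hw ⊢
  rcases hw with hw | ⟨hwS, u, huS, hadj, huniq⟩
  · exact Or.inl (h hw)
  · by_cases hwT : w ∈ T
    · exact Or.inl hwT
    · exact Or.inr ⟨hwT, u, h huS, hadj, fun x ha hxT => huniq x ha fun hS => hxT (h hS)⟩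

lemma zfStep_lift (G : SimpleGraph V) (H : SimpleGraph W) (f : V ↪ W)
    (hf : ∀ a b, G.Adj a b ↔ H.Adj (f a) (f b)) (S : Set V) :
    f '' (zfStep G S) ∪ (Set.range f)ᶜ ⊆ zfStep H (f '' S ∪ (Set.range f)ᶜ) := by
  rintro x (⟨w, hw, rfl⟩ | hx)
  · simp only [zfStep, Set.mem_union, Set.mem_setOf_eq] at hw
    rcases hw with hw | ⟨hwS, u, huS, hadj, huniq⟩
    · exact subset_zfStep H _ (Or.inl ⟨w, hw, rfl⟩)
    · right
      constructor
      · rintro (⟨w', hw', hww'⟩ | hr)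
        · exact hwS (f.injective hww' ▸ hw')
        · exact hr ⟨w, rfl⟩
      · refine ⟨f u, Or.inl ⟨u, huS, rfl⟩, (hf u w).1 hadj, ?_⟩
        intro x hax hxD
        have hxr : x ∈ Set.range f := by
          by_contra hc
          exact hxD (Or.inr hc)
        obtain ⟨y, rfl⟩ := hxr
        have hyS : y ∉ S := fun hy => hxD (Or.inl ⟨y, hy, rfl⟩)
        have := huniq y ((hf u y).2 hax) hyS
        rw [this]
  · exact subset_zfStep H _ (Or.inr hx)

lemma zfStep_iterate_lift (G : SimpleGraph V) (H : SimpleGraph W) (f : V ↪ W)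
    (hf : ∀ a b, G.Adj a b ↔ H.Adj (f a) (f b)) (B : Set V) (t : ℕ) :
    f '' ((zfStep G)^[t] B) ∪ (Set.range f)ᶜ ⊆
      (zfStep H)^[t] (f '' B ∪ (Set.range f)ᶜ) := by
  induction t with
  | zero => simp
  | succ t ih =>
    rw [Function.iterate_succ_apply', Function.iterate_succ_apply']
    exact (zfStep_lift G H f hf _).trans (zfStep_mono H ih)

/-- Part 1: the throttling lower-bound property is closed under induced supergraphs. -/
lemma zfTh_mono (k : ℕ) (V W : Type) [Fintype V] [Fintype W]
    (G : SimpleGraph V) (H : SimpleGraph W) (hc : HasInducedCopy G H)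
    (h : zfTh G < Fintype.card V - k) : zfTh H < Fintype.card W - k := by
  obtain ⟨f, hf⟩ := hc
  -- attain the throttling number
  have hne : {n | ∃ B : Set V, IsZFSet G B ∧ n = B.ncard + zfPt G B}.Nonempty :=
    ⟨_, Set.univ, ⟨0, rfl⟩, rfl⟩
  obtain ⟨B, hB, hBeq⟩ : ∃ B : Set V, IsZFSet G B ∧ zfTh G = B.ncard + zfPt G B :=
    Nat.sInf_mem hne
  -- attain the propagation time
  have hpt : (zfStep G)^[zfPt G B] B = Set.univ := Nat.sInf_mem hB
  set B' : Set W := f '' B ∪ (Set.range f)ᶜ with hB'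
  -- B' forces all of H in zfPt G B steps
  have hforce : (zfStep H)^[zfPt G B] B' = Set.univ := by
    apply Set.eq_univ_of_univ_subset
    have h1 := zfStep_iterate_lift G H f hf B (zfPt G B)
    rw [hpt, Set.image_univ, Set.union_compl_self] at h1
    exact h1
  have hZF : IsZFSet H B' := ⟨_, hforce⟩
  have hptle : zfPt H B' ≤ zfPt G B := Nat.sInf_le hforce
  have hthle : zfTh H ≤ B'.ncard + zfPt H B' := Nat.sInf_le ⟨B', hZF, rfl⟩
  -- cardinality of B'
  have hdisj : Disjoint (f '' B) (Set.range f)ᶜ :=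
    Set.disjoint_compl_right_iff_subset.mpr (Set.image_subset_range f B)
  have hcard : B'.ncard = B.ncard + (Fintype.card W - Fintype.card V) := by
    rw [hB', Set.ncard_union_eq hdisj (Set.toFinite _) (Set.toFinite _),
      Set.ncard_image_of_injective _ f.injective]
    congr 1
    have h2 : (Set.range f).ncard + (Set.range f)ᶜ.ncard = Fintype.card W := by
      rw [Set.ncard_add_ncard_compl]; exact Nat.card_eq_fintype_card
    have h3 : (Set.range f).ncard = Fintype.card V := by
      rw [← Set.image_univ, Set.ncard_image_of_injective _ f.injective, Set.ncard_univ,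
        Nat.card_eq_fintype_card]
    omega
  have hVW : Fintype.card V ≤ Fintype.card W := Fintype.card_le_of_embedding f
  omega

/-- The property `th(G) ≥ |V(G)| - k` is closed under induced
supergraphs; consequently it is characterized by a family of forbidden induced
subgraphs. -/
theorem stmt5 (k : ℕ) :
    (∀ (V W : Type) [Fintype V] [Fintype W] (G : SimpleGraph V) (H : SimpleGraph W),
      HasInducedCopy G H → zfTh G < Fintype.card V - k → zfTh H < Fintype.card W - k) ∧
    ∃ F : Set ((n : ℕ) × SimpleGraph (Fin n)),
      ∀ (V : Type) [Fintype V] (G : SimpleGraph V),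
        (Fintype.card V - k ≤ zfTh G ↔ ∀ X ∈ F, ¬ HasInducedCopy X.2 G) := by
  refine ⟨fun V W _ _ G H hc h => zfTh_mono k V W G H hc h, ?_⟩
  refine ⟨{p : (n : ℕ) × SimpleGraph (Fin n) | zfTh p.2 < p.1 - k}, ?_⟩
  intro V _ G
  constructor
  · rintro hth ⟨n, X⟩ hX hcopy
    have := zfTh_mono k (Fin n) V X G hcopy (by simpa using hX)
    omega
  · intro hF
    by_contra hlt
    push_neg at hlt
    set n := Fintype.card V with hn
    set e : V ≃ Fin n := Fintype.equivFin V
    set X : SimpleGraph (Fin n) := G.comap e.symm with hX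
    have hGX : HasInducedCopy G X := by
      refine ⟨e.toEmbedding, fun a b => ?_⟩
      simp [hX, SimpleGraph.comap]
    have hXG : HasInducedCopy X G := ⟨e.symm.toEmbedding, fun a b => Iff.rfl⟩
    have hXth : zfTh X < Fintype.card (Fin n) - k := by
      exact zfTh_mono k V (Fin n) G X hGX hlt
    refine hF ⟨n, X⟩ (by simpa using hXth) hXG

end ThrotPaper
end

section
/- If G is an a-accelerator for a positive integer a, then th(G) ≤ |V(G)| − a. -/
open SimpleGraph Set Function

namespace ThrotPaper

variable {V : Type*} {W : Type*} {α : Type*}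

/-- If `G` is an `a`-accelerator (`a ≥ 1`), then
`th(G) ≤ |V(G)| - a`. -/
theorem stmt8 {V : Type*} [Fintype V] (G : SimpleGraph V) (a : ℕ) (ha : 1 ≤ a)
    (hG : IsAccelerator G a) :
    zfTh G ≤ Fintype.card V - a := by
  obtain ⟨S, T, hST, hunion, hS, hT, f, hbij, hedge⟩ := hG
  -- After one step from S, everything is blue.
  have hstep : zfStep G S = Set.univ := by
    ext w
    simp only [Set.mem_univ, iff_true]
    by_cases hw : w ∈ S
    · exact Or.inl hw
    · have hwT : w ∈ T := by
        have : w ∈ S ∪ T := hunion ▸ Set.mem_univ w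
        exact this.resolve_left hw
      obtain ⟨u, huS, hfu⟩ := hbij.surjOn hwT
      refine Or.inr ⟨hw, u, huS, ?_, ?_⟩
      · exact (hedge u huS w hwT).mpr hfu
      · intro x hax hxS
        have hxT : x ∈ T := by
          have : x ∈ S ∪ T := hunion ▸ Set.mem_univ x
          exact this.resolve_left (by assumption)
        have := (hedge u huS x hxT).mp hax
        rw [← this, hfu]
  have hZF : IsZFSet G S := ⟨1, by simpa using hstep⟩
  have hpt : zfPt G S ≤ 1 := Nat.sInf_le (by simpa using hstep)
  have hcard : Fintype.card V = 2 * a + 2 := by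
    have hdisj : Disjoint S T := Set.disjoint_iff_inter_eq_empty.mpr hST
    have h1 : (S ∪ T).ncard = S.ncard + T.ncard := by
      refine Set.ncard_union_eq hdisj ?_ ?_ <;> exact Set.toFinite _
    rw [hunion, Set.ncard_univ, Nat.card_eq_fintype_card] at h1
    rw [h1, hS, hT]; ring
  have hmem : S.ncard + zfPt G S ∈
      {n | ∃ B : Set V, IsZFSet G B ∧ n = B.ncard + zfPt G B} := ⟨S, hZF, rfl⟩
  calc zfTh G ≤ S.ncard + zfPt G S := Nat.sInf_le hmem
    _ ≤ (a + 1) + 1 := by rw [hS]; omega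
    _ ≤ Fintype.card V - a := by omega

end ThrotPaper
end

section
/- If M is an (a_1, ..., a_r)-accelerator graph, then th(M) ≤ |V(M)| − (a_1 + ... + a_r); in particular, the set B = S_1 ∪ ⋃_{i=2}^r (S_i \ T_{i−1}) is a zero forcing set whose i-th time step forces exactly the set T_i. -/
open SimpleGraph Set Function

namespace ThrotPaper

variable {V : Type*} {W : Type*} {α : Type*}

/-- Auxiliary: the blue set at time `t` in the accelerator forcing process. -/
def accBlue {V : Type*} {r : ℕ} (B₀ : Set V) (T : Fin r → Set V) (t : ℕ) : Set V :=
  B₀ ∪ {v | ∃ k : Fin r, (k : ℕ) < t ∧ v ∈ T k}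

/-- An `(a₁,…,a_r)`-accelerator graph `M` satisfies
`th(M) ≤ |V(M)| - (a₁ + ⋯ + a_r)`; in particular
`B = S₁ ∪ ⋃_{i≥2} (Sᵢ \ Tᵢ₋₁)` is a zero forcing set whose `i`-th time step
forces exactly `Tᵢ`. -/
theorem stmt9 {V : Type*} [Fintype V] (M : SimpleGraph V) {r : ℕ}
    (a : Fin r → ℕ) (ha : ∀ i, 1 ≤ a i) (S T : Fin r → Set V)
    (hw : MultiAccelWitness M a S T) :
    zfTh M ≤ Fintype.card V - ∑ i, a i ∧
      ∀ B : Set V,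
        B = ⋃ i, {s ∈ S i | ∀ p : Fin r, (p : ℕ) + 1 = (i : ℕ) → s ∉ T p} →
          IsZFSet M B ∧ ∀ i : Fin r, newBlue M B ((i : ℕ) + 1) = T i := by
  classical
  obtain ⟨hcover, hScard, hTcard, hSdisj, hTdisj, hTS, hmatch, hedge, hback⟩ := hw
  set B₀ : Set V := ⋃ i, {s ∈ S i | ∀ p : Fin r, (p : ℕ) + 1 = (i : ℕ) → s ∉ T p} with hB₀def
  have hB₀mem : ∀ v : V, v ∈ B₀ ↔
      ∃ i, v ∈ S i ∧ ∀ p : Fin r, (p : ℕ) + 1 = (i : ℕ) → v ∉ T p := by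
    intro v
    simp only [hB₀def, Set.mem_iUnion, Set.mem_sep_iff]
  -- basic disjointness helpers
  have hSS : ∀ {i j : Fin r} {v : V}, v ∈ S i → v ∈ S j → i = j := by
    intro i j v hi hj
    by_contra h
    have h2 : v ∈ S i ∩ S j := ⟨hi, hj⟩
    rw [hSdisj i j h] at h2
    exact h2
  have hTT : ∀ {i j : Fin r} {v : V}, v ∈ T i → v ∈ T j → i = j := by
    intro i j v hi hj
    by_contra h
    have h2 : v ∈ T i ∩ T j := ⟨hi, hj⟩
    rw [hTdisj i j h] at h2
    exact h2
  have hTSmem : ∀ {i j : Fin r} {v : V}, v ∈ T i → v ∈ S j → (i : ℕ) + 1 = (j : ℕ) := by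
    intro i j v hi hj
    by_contra h
    have h2 : v ∈ T i ∩ S j := ⟨hi, hj⟩
    rw [hTS i j h] at h2
    exact h2
  have hBT : ∀ {k : Fin r} {v : V}, v ∈ B₀ → v ∉ T k := by
    intro k v hv hvT
    obtain ⟨i, hvS, hcond⟩ := (hB₀mem v).1 hv
    exact hcond k (hTSmem hvT hvS) hvT
  have hSmem : ∀ {i : Fin r} {v : V}, v ∈ S i →
      v ∈ B₀ ∨ ∃ p : Fin r, (p : ℕ) + 1 = (i : ℕ) ∧ v ∈ T p := by
    intro i v hv
    by_cases h : ∀ p : Fin r, (p : ℕ) + 1 = (i : ℕ) → v ∉ T p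
    · exact Or.inl ((hB₀mem v).2 ⟨i, hv, h⟩)
    · push_neg at h
      obtain ⟨p, hp, hpT⟩ := h
      exact Or.inr ⟨p, hp, hpT⟩
  have hcov : ∀ v : V, v ∈ B₀ ∨ ∃ k : Fin r, v ∈ T k := by
    intro v
    have hv : v ∈ ⋃ i, S i ∪ T i := by rw [hcover]; exact Set.mem_univ v
    rw [Set.mem_iUnion] at hv
    obtain ⟨i, hi⟩ := hv
    rcases hi with h | h
    · rcases hSmem h with h' | ⟨p, _, hp⟩
      · exact Or.inl h'
      · exact Or.inr ⟨p, hp⟩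
    · exact Or.inr ⟨i, h⟩
  -- membership facts about accBlue
  have hS_blue : ∀ {i : Fin r} {v : V} (t : ℕ), v ∈ S i → (i : ℕ) ≤ t →
      v ∈ accBlue B₀ T t := by
    intro i v t hv hit
    rcases hSmem hv with h | ⟨p, hp, hpT⟩
    · exact Or.inl h
    · exact Or.inr ⟨p, by omega, hpT⟩
  have hT_white : ∀ {j : Fin r} {v : V} {t : ℕ}, v ∈ T j → t ≤ (j : ℕ) →
      v ∉ accBlue B₀ T t := by
    intro j v t hv hjt hmem
    rcases hmem with h | ⟨k, hk, hkT⟩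
    · exact hBT h hv
    · have hkj : k = j := hTT hkT hv
      subst hkj
      omega
  have hBlueMono : ∀ t : ℕ, accBlue B₀ T t ⊆ accBlue B₀ T (t + 1) := by
    intro t v hv
    rcases hv with h | ⟨k, hk, hkT⟩
    · exact Or.inl h
    · exact Or.inr ⟨k, by omega, hkT⟩
  -- each vertex of S k has a matched neighbour in T k
  have hmatched : ∀ (k : Fin r), ∀ u ∈ S k, ∃ y ∈ T k, M.Adj u y := by
    intro k u hu
    obtain ⟨f, hfb, hfadj⟩ := hmatch k
    refine ⟨f u, hfb.mapsTo hu, ?_⟩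
    exact (hfadj u hu (f u) (hfb.mapsTo hu)).2 rfl
  -- the key step lemma
  have hstep : ∀ t : ℕ, zfStep M (accBlue B₀ T t) = accBlue B₀ T (t + 1) := by
    intro t
    apply Set.Subset.antisymm
    · intro w hw
      rcases hw with hw | ⟨hwW, u, huB, huw, hforce⟩
      · exact hBlueMono t hw
      by_contra hw1
      obtain ⟨j, hwT⟩ : ∃ j : Fin r, w ∈ T j := by
        rcases hcov w with h | h
        · exact absurd (Or.inl h : w ∈ accBlue B₀ T (t + 1)) hw1
        · exact h
      have hjt : t + 1 ≤ (j : ℕ) := by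
        by_contra h
        exact hw1 (Or.inr ⟨j, by omega, hwT⟩)
      -- a blue vertex in S k with k > j cannot be the forcer
      have hhigh : ∀ k : Fin r, u ∈ S k → (j : ℕ) < (k : ℕ) → False := by
        intro k huk hjk
        obtain ⟨y, hyT, hyadj⟩ := hmatched k u huk
        have hyW : y ∉ accBlue B₀ T t := hT_white hyT (by omega)
        have : y = w := hforce y hyadj hyW
        subst this
        have : k = j := hTT hyT hwT
        omega
      rcases hedge u w huw with ⟨k, hk | hk | hk | hk⟩ | ⟨k, l, hlk, hk | hk⟩
      · -- u ∈ S k, w ∈ T k : k = j, use the back neighbour in T (j-1)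
        have hkj : k = j := hTT hk.2 hwT
        subst hkj
        have hj1 : 1 ≤ (k : ℕ) := by omega
        have hkr : (k : ℕ) < r := k.isLt
        set i' : Fin r := ⟨(k : ℕ) - 1, by omega⟩ with hi'
        have hi'v : (i' : ℕ) = (k : ℕ) - 1 := rfl
        obtain ⟨y, hyT, hyadj⟩ := hback i' k (by omega) u hk.1
        have hyW : y ∉ accBlue B₀ T t := hT_white hyT (by omega)
        have hyw : y = w := hforce y hyadj hyW
        subst hyw
        have : i' = k := hTT hyT hwT
        have := congrArg Fin.val this
        omega
      · -- w ∈ S k, u ∈ T k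
        have hkt : (k : ℕ) < t := by
          rcases huB with h | ⟨m, hm, hmT⟩
          · exact absurd hk.2 (hBT h)
          · have : m = k := hTT hmT hk.2
            omega
        exact hwW (hS_blue t hk.1 (by omega))
      · -- u ∈ S k, w ∈ S k
        have hwB : w ∉ B₀ := fun h => hwW (Or.inl h)
        rcases hSmem hk.2 with h | ⟨p, hp, hpT⟩
        · exact hwB h
        · have hpj : p = j := hTT hpT hwT
          subst hpj
          exact hhigh k hk.1 (by omega)
      · -- u ∈ T k, w ∈ T k : u cannot be blue
        have hkj : k = j := hTT hk.2 hwT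
        subst hkj
        rcases huB with h | ⟨m, hm, hmT⟩
        · exact hBT h hk.1
        · have : m = k := hTT hmT hk.1
          omega
      · -- back edge with u high : u ∈ S k, w ∈ S l ∪ T l, l < k
        have hlk' : (l : ℕ) < (k : ℕ) := hlk
        have hjk : (j : ℕ) < (k : ℕ) := by
          rcases hk.2.2 with hx | hx
          · have hwB : w ∉ B₀ := fun h => hwW (Or.inl h)
            rcases hSmem hx with h | ⟨p, hp, hpT⟩
            · exact absurd h hwB
            · have : p = j := hTT hpT hwT
              omega
          · have : l = j := hTT hx hwT
            omega
        exact hhigh k hk.1 hjk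
      · -- back edge with w high : w ∈ B₀, contradiction
        exact hwW (Or.inl ((hB₀mem w).2 ⟨k, hk.1, hk.2.1⟩))
    · intro w hw
      rcases hw with hw | ⟨k, hk, hwT⟩
      · exact Or.inl (Or.inl hw)
      by_cases hlt : (k : ℕ) < t
      · exact Or.inl (Or.inr ⟨k, hlt, hwT⟩)
      have hkt : (k : ℕ) = t := by omega
      obtain ⟨f, hfb, hfadj⟩ := hmatch k
      obtain ⟨s, hsS, hsv⟩ := hfb.surjOn hwT
      refine Or.inr ⟨hT_white hwT (by omega), s, hS_blue t hsS (by omega),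
        (hfadj s hsS w hwT).2 hsv, ?_⟩
      intro x hadj hxW
      rcases hedge s x hadj with ⟨m, hm | hm | hm | hm⟩ | ⟨m, l, hlm, hm | hm⟩
      · -- s ∈ S m, x ∈ T m : m = k and x is the matched image of s
        have hmk : m = k := hSS hm.1 hsS
        subst hmk
        have hfx : f s = x := (hfadj s hsS x hm.2).1 hadj
        exact hfx.symm.trans hsv
      · -- x ∈ S m, s ∈ T m
        have h1 : (m : ℕ) + 1 = (k : ℕ) := hTSmem hm.2 hsS
        exact absurd (hS_blue t hm.1 (by omega)) hxW
      · -- both in S m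
        have hmk : m = k := hSS hm.1 hsS
        subst hmk
        exact absurd (hS_blue t hm.2 (by omega)) hxW
      · -- both in T m
        have h1 : (m : ℕ) + 1 = (k : ℕ) := hTSmem hm.1 hsS
        exact absurd (Or.inr ⟨m, by omega, hm.2⟩ : x ∈ accBlue B₀ T t) hxW
      · -- back edge, s high
        have hmk : m = k := hSS hm.1 hsS
        subst hmk
        have hlm' : (l : ℕ) < (m : ℕ) := hlm
        rcases hm.2.2 with hx | hx
        · exact absurd (hS_blue t hx (by omega)) hxW
        · exact absurd (Or.inr ⟨l, by omega, hx⟩ : x ∈ accBlue B₀ T t) hxW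
      · -- back edge, x high : x ∈ B₀
        exact absurd (Or.inl ((hB₀mem x).2 ⟨m, hm.1, hm.2.1⟩) : x ∈ accBlue B₀ T t) hxW
  have hiter : ∀ t : ℕ, (zfStep M)^[t] B₀ = accBlue B₀ T t := by
    intro t
    induction t with
    | zero =>
      simp only [Function.iterate_zero_apply]
      ext v
      constructor
      · exact fun h => Or.inl h
      · rintro (h | ⟨k, hk, -⟩)
        · exact h
        · omega
    | succ n ih =>
      rw [Function.iterate_succ_apply', ih, hstep]
  have hBlue_r : accBlue B₀ T r = Set.univ := by
    ext v
    simp only [Set.mem_univ, iff_true]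
    rcases hcov v with h | ⟨k, hk⟩
    · exact Or.inl h
    · exact Or.inr ⟨k, k.isLt, hk⟩
  have hZF : IsZFSet M B₀ := ⟨r, by rw [hiter r, hBlue_r]⟩
  have hpt : zfPt M B₀ ≤ r := Nat.sInf_le (by rw [Set.mem_setOf_eq, hiter r]; exact hBlue_r)
  -- cardinality estimate
  have hcard : B₀.ncard + (∑ i, a i + r) ≤ Fintype.card V := by
    have hdisj : ∀ i : Fin r, Disjoint B₀.toFinset (T i).toFinset := by
      intro i
      rw [Set.disjoint_toFinset]
      rw [Set.disjoint_right]
      intro v hvT hvB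
      exact hBT hvB hvT
    have hTdisj' : ∀ i ∈ (Finset.univ : Finset (Fin r)), ∀ j ∈ Finset.univ, i ≠ j →
        Disjoint (T i).toFinset (T j).toFinset := by
      intro i _ j _ hij
      rw [Set.disjoint_toFinset]
      rw [Set.disjoint_iff_inter_eq_empty]
      exact hTdisj i j hij
    have hcardU : (Finset.univ.biUnion fun i : Fin r => (T i).toFinset).card
        = ∑ i, a i + r := by
      rw [Finset.card_biUnion hTdisj']
      have : ∀ i : Fin r, (T i).toFinset.card = a i + 1 := by
        intro i
        rw [← Set.ncard_eq_toFinset_card']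
        exact hTcard i
      rw [Finset.sum_congr rfl fun i _ => this i, Finset.sum_add_distrib]
      simp
    have hdisjBU : Disjoint B₀.toFinset (Finset.univ.biUnion fun i : Fin r => (T i).toFinset) := by
      rw [Finset.disjoint_biUnion_right]
      exact fun i _ => hdisj i
    calc B₀.ncard + (∑ i, a i + r)
        = B₀.toFinset.card + (Finset.univ.biUnion fun i : Fin r => (T i).toFinset).card := by
          rw [Set.ncard_eq_toFinset_card', hcardU]
      _ = (B₀.toFinset ∪ Finset.univ.biUnion fun i : Fin r => (T i).toFinset).card := by
          rw [Finset.card_union_of_disjoint hdisjBU]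
      _ ≤ Fintype.card V := Finset.card_le_univ _
  constructor
  · have hmem : B₀.ncard + zfPt M B₀ ∈
        {n | ∃ B : Set V, IsZFSet M B ∧ n = B.ncard + zfPt M B} := ⟨B₀, hZF, rfl⟩
    calc zfTh M ≤ B₀.ncard + zfPt M B₀ := Nat.sInf_le hmem
      _ ≤ Fintype.card V - ∑ i, a i := by omega
  · intro B hB
    subst hB
    refine ⟨hZF, ?_⟩
    intro i
    show (zfStep M)^[(i : ℕ) + 1] B₀ \ (zfStep M)^[(i : ℕ) + 1 - 1] B₀ = T i
    rw [Nat.add_sub_cancel, hiter, hiter]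
    ext v
    constructor
    · rintro ⟨h1, h2⟩
      rcases h1 with h | ⟨k, hk, hkT⟩
      · exact absurd (Or.inl h : v ∈ accBlue B₀ T (i : ℕ)) h2
      · have hki : (k : ℕ) = (i : ℕ) := by
          by_contra h
          exact h2 (Or.inr ⟨k, by omega, hkT⟩)
        have : k = i := Fin.ext hki
        exact this ▸ hkT
    · intro hvT
      exact ⟨Or.inr ⟨i, by omega, hvT⟩, hT_white hvT le_rfl⟩

end ThrotPaper
end

section
/- If G is a connected graph on n vertices and m edges with maximal adjacency spectral radius among all connected graphs with n vertices and m edges, then th(G) = n. -/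
open SimpleGraph Set Function

namespace ThrotPaper

variable {V : Type*} {W : Type*} {α : Type*}

section Stmt13Aux
open Matrix
open scoped RealInnerProductSpace Classical

variable {V : Type} [Fintype V] [DecidableEq V]

/-- Double force pattern. -/
def DFP (G : SimpleGraph V) : Prop :=
  ∃ u₁ w₁ u₂ w₂ : V, w₁ ≠ w₂ ∧ u₁ ≠ w₁ ∧ u₁ ≠ w₂ ∧ u₂ ≠ w₁ ∧ u₂ ≠ w₂ ∧
    G.Adj u₁ w₁ ∧ G.Adj u₂ w₂ ∧ ¬ G.Adj u₁ w₂ ∧ ¬ G.Adj u₂ w₁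

lemma zfStep_ncard (G : SimpleGraph V) (h : ¬ DFP G) (S : Set V) :
    (zfStep G S).ncard ≤ S.ncard + 1 := by
  classical
  have hsub : {w | w ∉ S ∧ ∃ u ∈ S, G.Adj u w ∧ ∀ x, G.Adj u x → x ∉ S → x = w}.Subsingleton := by
    rintro w₁ ⟨hw₁, u₁, hu₁, ha₁, hf₁⟩ w₂ ⟨hw₂, u₂, hu₂, ha₂, hf₂⟩
    by_contra hne
    exact h ⟨u₁, w₁, u₂, w₂, hne, fun e => hw₁ (e ▸ hu₁), fun e => hw₂ (e ▸ hu₁),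
      fun e => hw₁ (e ▸ hu₂), fun e => hw₂ (e ▸ hu₂), ha₁, ha₂,
      fun hadj => hne (hf₁ _ hadj hw₂).symm, fun hadj => hne (hf₂ _ hadj hw₁)⟩
  calc (zfStep G S).ncard ≤ S.ncard + {w | w ∉ S ∧ ∃ u ∈ S, G.Adj u w ∧
        ∀ x, G.Adj u x → x ∉ S → x = w}.ncard := Set.ncard_union_le _ _
    _ ≤ S.ncard + 1 := by
        gcongr
        exact (Set.ncard_le_one_iff (Set.toFinite _)).mpr (fun ha hb => hsub ha hb)

lemma iterate_ncard (G : SimpleGraph V) (h : ¬ DFP G) (B : Set V) (t : ℕ) :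
    ((zfStep G)^[t] B).ncard ≤ B.ncard + t := by
  induction t with
  | zero => simp
  | succ t ih =>
    rw [Function.iterate_succ_apply']
    calc (zfStep G ((zfStep G)^[t] B)).ncard ≤ ((zfStep G)^[t] B).ncard + 1 :=
        zfStep_ncard G h _
      _ ≤ B.ncard + (t+1) := by omega

lemma zfTh_eq_card (G : SimpleGraph V) (h : ¬ DFP G) : zfTh G = Fintype.card V := by
  classical
  have hmem : Fintype.card V ∈ {n | ∃ B : Set V, IsZFSet G B ∧ n = B.ncard + zfPt G B} := by
    refine ⟨Set.univ, ⟨0, rfl⟩, ?_⟩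
    have : zfPt G (Set.univ : Set V) = 0 := by
      have : (0:ℕ) ∈ {t | (zfStep G)^[t] (Set.univ : Set V) = Set.univ} := rfl
      simp [zfPt, Nat.sInf_eq_zero.mpr (Or.inl this)]
    rw [this, Set.ncard_univ, Nat.card_eq_fintype_card, Nat.add_zero]
  refine le_antisymm (Nat.sInf_le hmem) (le_csInf ⟨_, hmem⟩ ?_)
  rintro n ⟨B, hB, rfl⟩
  have hne : {t | (zfStep G)^[t] B = Set.univ}.Nonempty := hB
  have hend : (zfStep G)^[zfPt G B] B = Set.univ := Nat.sInf_mem hne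
  have := iterate_ncard G h B (zfPt G B)
  rw [hend, Set.ncard_univ, Nat.card_eq_fintype_card] at this
  exact this

noncomputable def ray (K : SimpleGraph V) (x : V → ℝ) : ℝ :=
  x ⬝ᵥ (K.adjMatrix ℝ).mulVec x

noncomputable def clm (K : SimpleGraph V) : EuclideanSpace ℝ V →L[ℝ] EuclideanSpace ℝ V :=
  (Matrix.toEuclideanLin ((K.adjMatrix ℝ))).toContinuousLinearMap

lemma clm_apply (K : SimpleGraph V) (x : EuclideanSpace ℝ V) :
    clm K x = (K.adjMatrix ℝ).mulVec x := rfl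

lemma clm_selfAdjoint (K : SimpleGraph V) : IsSelfAdjoint (clm K) := by
  rw [ContinuousLinearMap.isSelfAdjoint_iff_isSymmetric]
  have h : (K.adjMatrix ℝ).IsHermitian := by
    simpa [Matrix.IsHermitian] using (K.isSymm_adjMatrix (α := ℝ))
  exact Matrix.isHermitian_iff_isSymmetric.mp h

lemma reApply_eq_ray (K : SimpleGraph V) (x : EuclideanSpace ℝ V) :
    (clm K).reApplyInnerSelf x = ray K (fun v => x v) := by
  simp only [ContinuousLinearMap.reApplyInnerSelf]
  rw [real_inner_comm, PiLp.inner_apply]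
  simp [ray, dotProduct, clm_apply, Matrix.mulVec]
  exact Finset.sum_congr rfl fun _ _ => mul_comm _ _

lemma ray_nonneg (K : SimpleGraph V) (x : V → ℝ) (hx : ∀ v, 0 ≤ x v) : 0 ≤ ray K x := by
  unfold ray dotProduct Matrix.mulVec
  refine Finset.sum_nonneg fun v _ => mul_nonneg (hx v) (Finset.sum_nonneg fun w _ => ?_)
  exact mul_nonneg (by simp [SimpleGraph.adjMatrix_apply]; positivity) (hx w)

lemma ray_abs_le (K : SimpleGraph V) (x : V → ℝ) :
    |ray K x| ≤ ray K (fun v => |x v|) := by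
  unfold ray dotProduct Matrix.mulVec
  calc |∑ v, x v * ∑ w, K.adjMatrix ℝ v w * x w|
      ≤ ∑ v, |x v * ∑ w, K.adjMatrix ℝ v w * x w| := Finset.abs_sum_le_sum_abs _ _
    _ ≤ ∑ v, |x v| * ∑ w, K.adjMatrix ℝ v w * |x w| := by
        refine Finset.sum_le_sum fun v _ => ?_
        rw [abs_mul]
        refine mul_le_mul_of_nonneg_left ?_ (abs_nonneg _)
        calc |∑ w, K.adjMatrix ℝ v w * x w| ≤ ∑ w, |K.adjMatrix ℝ v w * x w| :=
            Finset.abs_sum_le_sum_abs _ _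
          _ = ∑ w, K.adjMatrix ℝ v w * |x w| := by
              refine Finset.sum_congr rfl fun w _ => ?_
              rw [abs_mul, abs_of_nonneg (by simp [SimpleGraph.adjMatrix_apply]; positivity)]

/-- the componentwise absolute value, as an element of Euclidean space -/
noncomputable def absVec (x : EuclideanSpace ℝ V) : EuclideanSpace ℝ V :=
  (WithLp.equiv 2 (V → ℝ)).symm (fun v => |x v|)

lemma absVec_apply (x : EuclideanSpace ℝ V) (v : V) : absVec x v = |x v| := rfl

lemma norm_absVec (x : EuclideanSpace ℝ V) : ‖absVec x‖ = ‖x‖ := by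
  rw [EuclideanSpace.norm_eq, EuclideanSpace.norm_eq]
  congr 1
  exact Finset.sum_congr rfl fun v _ => by simp [absVec_apply]

lemma exists_spec_max (K : SimpleGraph V) [Nonempty V] :
    ∃ x : EuclideanSpace ℝ V, ‖x‖ = 1 ∧ (∀ v, 0 ≤ x v) ∧
      IsMaxOn (clm K).reApplyInnerSelf (Metric.sphere 0 1) x := by
  have hne : (Metric.sphere (0 : EuclideanSpace ℝ V) 1).Nonempty := by
    refine ⟨EuclideanSpace.single (Classical.arbitrary V) (1:ℝ), ?_⟩
    simp [mem_sphere_zero_iff_norm, EuclideanSpace.norm_single]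
  obtain ⟨x₀, hx₀mem, hx₀max⟩ := (isCompact_sphere (0 : EuclideanSpace ℝ V) 1).exists_isMaxOn
    hne (clm K).reApplyInnerSelf_continuous.continuousOn
  have hx₀ : ‖x₀‖ = 1 := mem_sphere_zero_iff_norm.mp hx₀mem
  refine ⟨absVec x₀, by rw [norm_absVec, hx₀], fun v => abs_nonneg _, ?_⟩
  intro z hz
  show (clm K).reApplyInnerSelf z ≤ (clm K).reApplyInnerSelf (absVec x₀)
  have h1 : (clm K).reApplyInnerSelf z ≤ (clm K).reApplyInnerSelf x₀ := hx₀max hz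
  refine le_trans h1 ?_
  rw [reApply_eq_ray, reApply_eq_ray]
  calc ray K (fun v => x₀ v) ≤ |ray K (fun v => x₀ v)| := le_abs_self _
    _ ≤ ray K (fun v => |x₀ v|) := ray_abs_le _ _
    _ = ray K (fun v => absVec x₀ v) := rfl

lemma eigen_of_max (K : SimpleGraph V) (x : EuclideanSpace ℝ V) (hx : ‖x‖ = 1)
    (hmax : IsMaxOn (clm K).reApplyInnerSelf (Metric.sphere 0 1) x) :
    (K.adjMatrix ℝ).mulVec (fun v => x v) = ray K (fun v => x v) • (fun v => x v) := by
  have hx0 : x ≠ 0 := by intro h; rw [h] at hx; simp at hx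
  have hextr : IsLocalExtrOn (clm K).reApplyInnerSelf (Metric.sphere (0:EuclideanSpace ℝ V) ‖x‖) x := by
    rw [hx]; exact Or.inr hmax.localize
  have hev := (clm_selfAdjoint K).hasEigenvector_of_isLocalExtrOn hx0 hextr
  have heq : clm K x = ((clm K).rayleighQuotient x) • x := by
    have := hev.apply_eq_smul
    simpa using this
  have hq : (clm K).rayleighQuotient x = ray K (fun v => x v) := by
    rw [ContinuousLinearMap.rayleighQuotient, reApply_eq_ray, hx]
    simp
  rw [hq] at heq
  funext v
  have := congrFun (congrArg (fun (y : EuclideanSpace ℝ V) => (y : V → ℝ)) heq) v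
  simpa [clm_apply] using this

lemma mem_spectrum_iff (A : Matrix V V ℝ) (μ : ℝ) :
    μ ∈ spectrum ℝ A ↔ ∃ v : V → ℝ, v ≠ 0 ∧ A.mulVec v = μ • v := by
  rw [spectrum.mem_iff]
  rw [Matrix.isUnit_iff_isUnit_det, isUnit_iff_ne_zero, not_ne_iff]
  rw [← Matrix.exists_mulVec_eq_zero_iff]
  constructor
  · rintro ⟨v, hv, hmv⟩
    refine ⟨v, hv, ?_⟩
    have : (algebraMap ℝ (Matrix V V ℝ) μ).mulVec v - A.mulVec v = 0 := by
      rw [← Matrix.sub_mulVec]; exact hmv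
    have h2 : (algebraMap ℝ (Matrix V V ℝ) μ).mulVec v = μ • v := by
      rw [Algebra.algebraMap_eq_smul_one, Matrix.smul_mulVec, Matrix.one_mulVec]
    rw [h2] at this
    exact (sub_eq_zero.mp this).symm
  · rintro ⟨v, hv, hmv⟩
    refine ⟨v, hv, ?_⟩
    rw [Matrix.sub_mulVec, Algebra.algebraMap_eq_smul_one, Matrix.smul_mulVec,
      Matrix.one_mulVec, hmv, sub_self]

lemma sSup_spec_eq (K : SimpleGraph V) [Nonempty V] (x : EuclideanSpace ℝ V) (hx : ‖x‖ = 1)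
    (hpos : ∀ v, 0 ≤ x v)
    (hmax : IsMaxOn (clm K).reApplyInnerSelf (Metric.sphere 0 1) x) :
    sSup (abs '' spectrum ℝ (K.adjMatrix ℝ)) = ray K (fun v => x v) := by
  have heig := eigen_of_max K x hx hmax
  have hx0 : (fun v => x v) ≠ (0 : V → ℝ) := by
    intro h
    have : x = 0 := by
      ext v; simpa using congrFun h v
    rw [this] at hx; simp at hx
  refine IsGreatest.csSup_eq ⟨⟨ray K (fun v => x v), ?_, ?_⟩, ?_⟩
  · exact (mem_spectrum_iff _ _).mpr ⟨_, hx0, heig⟩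
  · exact abs_of_nonneg (ray_nonneg K _ (fun v => hpos v))
  · rintro y ⟨μ, hμ, rfl⟩
    obtain ⟨v, hv, hmv⟩ := (mem_spectrum_iff _ _).mp hμ
    set ve : EuclideanSpace ℝ V := (WithLp.equiv 2 (V → ℝ)).symm v with hve
    have hvn : ‖ve‖ ≠ 0 := by
      simp only [norm_ne_zero_iff]
      intro h; apply hv; funext i; exact congrArg (fun y : EuclideanSpace ℝ V => y.ofLp i) h
    set u : EuclideanSpace ℝ V := ‖ve‖⁻¹ • ve with hu
    have hun : ‖u‖ = 1 := by
      rw [hu, norm_smul, norm_inv, norm_norm]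
      exact inv_mul_cancel₀ hvn
    have huapp : ∀ i, u i = ‖ve‖⁻¹ * v i := fun i => rfl
    have hmu : (K.adjMatrix ℝ).mulVec (fun i => u i) = μ • (fun i => u i) := by
      funext i
      have h1 : (K.adjMatrix ℝ).mulVec (fun i => u i) i
          = ‖ve‖⁻¹ * ((K.adjMatrix ℝ).mulVec v i) := by
        simp only [Matrix.mulVec, dotProduct, huapp]
        rw [Finset.mul_sum]
        exact Finset.sum_congr rfl fun w _ => by ring
      rw [h1, hmv]
      simp [huapp]
      ring
    have hray : ray K (fun i => u i) = μ := by
      unfold ray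
      rw [hmu]
      have : (fun i => u i) ⬝ᵥ μ • (fun i => u i) = μ * ∑ i, u i * u i := by
        simp [dotProduct, Finset.mul_sum]
        exact Finset.sum_congr rfl fun w _ => by ring
      rw [this]
      have hs : ∑ i, u i * u i = 1 := by
        have := real_inner_self_eq_norm_sq u
        rw [PiLp.inner_apply] at this
        simpa [hun, pow_two] using this
      rw [hs, mul_one]
    calc |μ| = |ray K (fun i => u i)| := by rw [hray]
      _ ≤ ray K (fun i => |u i|) := ray_abs_le _ _
      _ = (clm K).reApplyInnerSelf (absVec u) := by rw [reApply_eq_ray]; rfl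
      _ ≤ (clm K).reApplyInnerSelf x := by
          refine hmax ?_
          simp [mem_sphere_zero_iff_norm, norm_absVec, hun]
      _ = ray K (fun v => x v) := reApply_eq_ray _ _

lemma zero_prop (K : SimpleGraph V) (x : V → ℝ) (hpos : ∀ v, 0 ≤ x v) (μ : ℝ)
    (heig : (K.adjMatrix ℝ).mulVec x = μ • x) :
    ∀ {z v : V} (_ : K.Walk z v), x z = 0 → x v = 0 := by
  intro z v w
  induction w with
  | nil => exact id
  | @cons z y v h p ih =>
    intro hz
    refine ih ?_
    have hrow : ∑ w, K.adjMatrix ℝ z w * x w = 0 := by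
      have := congrFun heig z
      simp only [Matrix.mulVec, dotProduct] at this
      rw [this, Pi.smul_apply, hz, smul_eq_mul, mul_zero]
    have hall := (Finset.sum_eq_zero_iff_of_nonneg (fun w _ =>
      mul_nonneg (by simp [SimpleGraph.adjMatrix_apply]; positivity) (hpos w))).mp hrow
    have := hall y (Finset.mem_univ y)
    rw [SimpleGraph.adjMatrix_apply, if_pos h, one_mul] at this
    exact this

lemma eigen_pos (K : SimpleGraph V) (hK : K.Connected) (x : V → ℝ) (hnz : x ≠ 0)
    (hpos : ∀ v, 0 ≤ x v) (μ : ℝ) (heig : (K.adjMatrix ℝ).mulVec x = μ • x) :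
    ∀ v, 0 < x v := by
  intro v
  rcases lt_or_eq_of_le (hpos v) with h | h
  · exact h
  exfalso
  apply hnz
  funext u
  obtain ⟨w⟩ := hK.preconnected v u
  exact zero_prop K x hpos μ heig w h.symm

section Rot
variable {G : SimpleGraph V} {a b c d : V}

def rot (G : SimpleGraph V) (a b c d : V) : SimpleGraph V :=
  (G.deleteEdges {s(a,b)}) ⊔ SimpleGraph.fromEdgeSet {s(c,d)}

lemma adj_of_sym2_eq (hab : G.Adj a b) (h : s(p,q) = s(a,b)) : G.Adj p q := by
  rcases Sym2.eq_iff.mp h with ⟨rfl, rfl⟩ | ⟨rfl, rfl⟩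
  · exact hab
  · exact hab.symm

lemma rot_adj (hcd' : c ≠ d) (p q : V) :
    (rot G a b c d).Adj p q ↔ (G.Adj p q ∧ s(p,q) ≠ s(a,b)) ∨ s(p,q) = s(c,d) := by
  simp only [rot, SimpleGraph.sup_adj, SimpleGraph.deleteEdges_adj, Set.mem_singleton_iff,
    SimpleGraph.fromEdgeSet_adj]
  constructor
  · rintro (⟨h1, h2⟩ | ⟨h1, _⟩)
    · exact Or.inl ⟨h1, h2⟩
    · exact Or.inr h1
  · rintro (⟨h1, h2⟩ | h1)
    · exact Or.inl ⟨h1, h2⟩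
    · refine Or.inr ⟨h1, ?_⟩
      rintro rfl
      rcases Sym2.eq_iff.mp h1 with ⟨rfl, rfl⟩ | ⟨rfl, rfl⟩ <;> exact hcd' rfl

lemma rot_entry (hab : G.Adj a b) (hcd : ¬ G.Adj c d) (hcd' : c ≠ d) (p q : V) :
    (rot G a b c d).adjMatrix ℝ p q = G.adjMatrix ℝ p q
      + (if s(p,q) = s(c,d) then 1 else 0) - (if s(p,q) = s(a,b) then 1 else 0) := by
  by_cases h1 : s(p,q) = s(c,d)
  · have hne : ¬ G.Adj p q := fun h => hcd (adj_of_sym2_eq h h1.symm)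
    have h2 : s(p,q) ≠ s(a,b) := fun h => hne (adj_of_sym2_eq hab h)
    have hadj : (rot G a b c d).Adj p q := (rot_adj hcd' p q).mpr (Or.inr h1)
    rw [if_pos h1, if_neg h2, SimpleGraph.adjMatrix_apply, SimpleGraph.adjMatrix_apply,
      if_pos hadj, if_neg hne]
    ring
  · by_cases h2 : s(p,q) = s(a,b)
    · have hadj : G.Adj p q := adj_of_sym2_eq hab h2
      have hna : ¬ (rot G a b c d).Adj p q := by
        rw [rot_adj hcd']
        rintro (⟨_, h⟩ | h)
        · exact h h2
        · exact h1 h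
      rw [if_neg h1, if_pos h2, SimpleGraph.adjMatrix_apply, SimpleGraph.adjMatrix_apply,
        if_neg hna, if_pos hadj]
      ring
    · have hiff : (rot G a b c d).Adj p q ↔ G.Adj p q := by
        rw [rot_adj hcd']
        constructor
        · rintro (⟨h, _⟩ | h)
          · exact h
          · exact absurd h h1
        · exact fun h => Or.inl ⟨h, h2⟩
      rw [if_neg h1, if_neg h2, SimpleGraph.adjMatrix_apply, SimpleGraph.adjMatrix_apply]
      by_cases h3 : G.Adj p q
      · rw [if_pos (hiff.mpr h3), if_pos h3]; ring
      · rw [if_neg (fun h => h3 (hiff.mp h)), if_neg h3]; ring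

lemma sum_pair (h : c ≠ d) (x y : V → ℝ) :
    ∑ p, ∑ q, (if s(p,q) = s(c,d) then x p * y q else 0) = x c * y d + x d * y c := by
  have hinner : ∀ p, ∑ q, (if s(p,q) = s(c,d) then x p * y q else 0)
      = (if p = c then x c * y d else 0) + (if p = d then x d * y c else 0) := by
    intro p
    by_cases hp : p = c
    · subst hp
      simp [Sym2.eq_iff, h, h.symm, Finset.sum_ite_eq']
    · by_cases hp2 : p = d
      · subst hp2
        simp [Sym2.eq_iff, hp, h, h.symm, Finset.sum_ite_eq']
      · simp [Sym2.eq_iff, hp, hp2]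
  rw [Finset.sum_congr rfl (fun p _ => hinner p), Finset.sum_add_distrib,
    Finset.sum_ite_eq' Finset.univ c, Finset.sum_ite_eq' Finset.univ d,
    if_pos (Finset.mem_univ c), if_pos (Finset.mem_univ d)]


lemma ray_eq_sum (K : SimpleGraph V) (x : V → ℝ) :
    ray K x = ∑ p, ∑ q, K.adjMatrix ℝ p q * (x p * x q) := by
  unfold ray dotProduct Matrix.mulVec dotProduct
  refine Finset.sum_congr rfl fun p _ => ?_
  rw [Finset.mul_sum]
  exact Finset.sum_congr rfl fun q _ => by ring

lemma ray_rot (hab : G.Adj a b) (hcd : ¬ G.Adj c d) (hcd' : c ≠ d) (x : V → ℝ) :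
    ray (rot G a b c d) x = ray G x + 2*(x c * x d) - 2*(x a * x b) := by
  rw [ray_eq_sum, ray_eq_sum]
  have key : ∀ p q, (rot G a b c d).adjMatrix ℝ p q * (x p * x q)
      = G.adjMatrix ℝ p q * (x p * x q)
        + (if s(p,q) = s(c,d) then x p * x q else 0)
        - (if s(p,q) = s(a,b) then x p * x q else 0) := by
    intro p q
    rw [rot_entry hab hcd hcd' p q]
    split_ifs <;> ring
  calc ∑ p, ∑ q, (rot G a b c d).adjMatrix ℝ p q * (x p * x q)
      = ∑ p, ((∑ q, G.adjMatrix ℝ p q * (x p * x q))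
        + (∑ q, if s(p,q) = s(c,d) then x p * x q else 0)
        - (∑ q, if s(p,q) = s(a,b) then x p * x q else 0)) := by
        refine Finset.sum_congr rfl fun p _ => ?_
        simp only [key]
        rw [Finset.sum_sub_distrib, Finset.sum_add_distrib]
    _ = (∑ p, ∑ q, G.adjMatrix ℝ p q * (x p * x q))
        + (∑ p, ∑ q, if s(p,q) = s(c,d) then x p * x q else 0)
        - (∑ p, ∑ q, if s(p,q) = s(a,b) then x p * x q else 0) := by
        rw [Finset.sum_sub_distrib, Finset.sum_add_distrib]
    _ = (∑ p, ∑ q, G.adjMatrix ℝ p q * (x p * x q)) + 2*(x c * x d) - 2*(x a * x b) := by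
        rw [sum_pair hcd' x x, sum_pair hab.ne x x]
        ring

lemma mulVec_rot (hab : G.Adj a b) (hcd : ¬ G.Adj c d) (hcd' : c ≠ d)
    (hbc : b ≠ c) (hbd : b ≠ d) (hba : b ≠ a) (x : V → ℝ) :
    ((rot G a b c d).adjMatrix ℝ).mulVec x b = (G.adjMatrix ℝ).mulVec x b - x a := by
  unfold Matrix.mulVec dotProduct
  have key : ∀ q, (rot G a b c d).adjMatrix ℝ b q * x q
      = G.adjMatrix ℝ b q * x q
        + (if s(b,q) = s(c,d) then x q else 0) - (if s(b,q) = s(a,b) then x q else 0) := by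
    intro q
    rw [rot_entry hab hcd hcd' b q]
    split_ifs <;> ring
  rw [Finset.sum_congr rfl (fun q _ => key q), Finset.sum_sub_distrib,
    Finset.sum_add_distrib]
  have h1 : (∑ q, if s(b,q) = s(c,d) then x q else 0) = 0 := by
    refine Finset.sum_eq_zero fun q _ => ?_
    rw [if_neg]
    simp only [Sym2.eq_iff]
    rintro (⟨rfl, rfl⟩ | ⟨rfl, rfl⟩)
    · exact hbc rfl
    · exact hbd rfl
  have h2 : (∑ q, if s(b,q) = s(a,b) then x q else 0) = x a := by
    rw [Finset.sum_congr rfl (fun q _ => show (if s(b,q) = s(a,b) then x q else 0)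
        = (if q = a then x q else 0) by
      congr 1
      simp only [eq_iff_iff, Sym2.eq_iff]
      constructor
      · rintro (⟨rfl, rfl⟩ | ⟨_, rfl⟩)
        · exact absurd rfl hba
        · rfl
      · rintro rfl; exact Or.inr ⟨by simp, by simp⟩)]
    rw [Finset.sum_ite_eq' Finset.univ a, if_pos (Finset.mem_univ a)]
  rw [h1, h2]
  ring

lemma rot_ncard (hab : G.Adj a b) (hcd : ¬ G.Adj c d) (hcd' : c ≠ d) :
    (rot G a b c d).edgeSet.ncard = G.edgeSet.ncard := by
  have hdiag : s(c,d) ∉ {e : Sym2 V | e.IsDiag} := by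
    simp [Sym2.mk_isDiag_iff, hcd']
  have hsingle : ({s(c,d)} : Set (Sym2 V)) \ {e | e.IsDiag} = {s(c,d)} := by
    ext e
    constructor
    · rintro ⟨h, _⟩; exact h
    · intro h
      refine ⟨h, ?_⟩
      rw [Set.mem_singleton_iff] at h
      subst h
      exact hdiag
  have hE : (rot G a b c d).edgeSet = insert s(c,d) (G.edgeSet \ {s(a,b)}) := by
    rw [rot, SimpleGraph.edgeSet_sup, SimpleGraph.edgeSet_deleteEdges,
      SimpleGraph.edgeSet_fromEdgeSet,
      show ({s(c,d)} : Set (Sym2 V)) \ Sym2.diagSet = {s(c,d)} from hsingle, Set.union_comm, Set.singleton_union]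
  rw [hE]
  have hnotmem : s(c,d) ∉ G.edgeSet \ {s(a,b)} := fun h => hcd ((G.mem_edgeSet).mp h.1)
  rw [Set.ncard_insert_of_notMem hnotmem (Set.toFinite _),
    Set.ncard_diff_singleton_add_one ((G.mem_edgeSet).mpr hab) (Set.toFinite _)]

lemma rotation_contra (G : SimpleGraph V) [Nonempty V] (hG : G.Connected)
    (hmax : ∀ H : SimpleGraph V, H.Connected → H.edgeSet.ncard = G.edgeSet.ncard →
      sSup (abs '' spectrum ℝ (H.adjMatrix ℝ)) ≤ sSup (abs '' spectrum ℝ (G.adjMatrix ℝ)))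
    (x : EuclideanSpace ℝ V) (hx1 : ‖x‖ = 1) (hpos0 : ∀ v, 0 ≤ x v)
    (hxmax : IsMaxOn (clm G).reApplyInnerSelf (Metric.sphere 0 1) x)
    {a b c d : V} (hab : G.Adj a b) (hcd : ¬ G.Adj c d) (hcd' : c ≠ d)
    (hray : x a * x b ≤ x c * x d) (hbc : b ≠ c) (hbd : b ≠ d)
    (hconn : (rot G a b c d).Connected) : False := by
  set xf : V → ℝ := fun v => x v with hxf
  have heigG := eigen_of_max G x hx1 hxmax
  have hxnz : xf ≠ 0 := by
    intro h
    have : x = 0 := by ext v; simpa using congrFun h v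
    rw [this] at hx1; simp at hx1
  have hxpos : ∀ v, 0 < xf v := eigen_pos G hG xf hxnz hpos0 _ heigG
  have hspecG := sSup_spec_eq G x hx1 hpos0 hxmax
  set H := rot G a b c d with hH
  have hrayH : ray H xf = ray G xf + 2*(x c * x d) - 2*(x a * x b) :=
    ray_rot hab hcd hcd' xf
  have hge : ray G xf ≤ ray H xf := by rw [hrayH]; nlinarith
  obtain ⟨y, hy1, hy0, hymax⟩ := exists_spec_max H
  have hspecH := sSup_spec_eq H y hy1 hy0 hymax
  have hHle : sSup (abs '' spectrum ℝ (H.adjMatrix ℝ))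
      ≤ sSup (abs '' spectrum ℝ (G.adjMatrix ℝ)) :=
    hmax H hconn (rot_ncard hab hcd hcd')
  have hxsph : x ∈ Metric.sphere (0 : EuclideanSpace ℝ V) 1 := by
    simp [mem_sphere_zero_iff_norm, hx1]
  have hxley : ray H xf ≤ ray H (fun v => y v) := by
    have h0 : (clm H).reApplyInnerSelf x ≤ (clm H).reApplyInnerSelf y := hymax hxsph
    rwa [reApply_eq_ray, reApply_eq_ray] at h0
  have hEq : ray H xf = ray H (fun v => y v) := by
    refine le_antisymm hxley ?_
    calc ray H (fun v => y v) = sSup (abs '' spectrum ℝ (H.adjMatrix ℝ)) := hspecH.symm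
      _ ≤ sSup (abs '' spectrum ℝ (G.adjMatrix ℝ)) := hHle
      _ = ray G xf := hspecG
      _ ≤ ray H xf := hge
  have hxmaxH : IsMaxOn (clm H).reApplyInnerSelf (Metric.sphere 0 1) x := by
    intro z hz
    show (clm H).reApplyInnerSelf z ≤ (clm H).reApplyInnerSelf x
    rw [reApply_eq_ray, reApply_eq_ray]
    calc ray H (fun v => z v) ≤ ray H (fun v => y v) := by
          have h0 : (clm H).reApplyInnerSelf z ≤ (clm H).reApplyInnerSelf y := hymax hz
          rwa [reApply_eq_ray, reApply_eq_ray] at h0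
      _ = ray H xf := hEq.symm
  have heigH := eigen_of_max H x hx1 hxmaxH
  have hrEq : ray H xf = ray G xf := by
    refine le_antisymm ?_ hge
    calc ray H xf = ray H (fun v => y v) := hEq
      _ = sSup (abs '' spectrum ℝ (H.adjMatrix ℝ)) := hspecH.symm
      _ ≤ ray G xf := hspecG ▸ hHle
  have hrow := mulVec_rot hab hcd hcd' hbc hbd hab.ne' xf
  have h1 : (H.adjMatrix ℝ).mulVec xf b = ray G xf * xf b := by
    rw [show ((H.adjMatrix ℝ).mulVec xf b) = (ray H xf • xf) b from by rw [← heigH],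
      Pi.smul_apply, smul_eq_mul, hrEq]
  have h2 : (G.adjMatrix ℝ).mulVec xf b = ray G xf * xf b := by
    rw [show ((G.adjMatrix ℝ).mulVec xf b) = (ray G xf • xf) b from by rw [← heigG],
      Pi.smul_apply, smul_eq_mul]
  rw [h1, h2] at hrow
  have : xf a = 0 := by linarith
  exact absurd this (ne_of_gt (hxpos a))

lemma reach_del_aux (G : SimpleGraph V) (a b : V) {v u : V} (w : G.Walk v u) :
    (G.deleteEdges {s(a,b)}).Reachable v u ∨ (G.deleteEdges {s(a,b)}).Reachable v a ∨
      (G.deleteEdges {s(a,b)}).Reachable v b := by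
  induction w with
  | nil => exact Or.inl (SimpleGraph.Reachable.refl _)
  | @cons v u' _ h p ih =>
    by_cases he : s(v, u') = s(a, b)
    · rcases Sym2.eq_iff.mp he with ⟨rfl, rfl⟩ | ⟨rfl, rfl⟩
      · exact Or.inr (Or.inl (SimpleGraph.Reachable.refl _))
      · exact Or.inr (Or.inr (SimpleGraph.Reachable.refl _))
    · have hK : (G.deleteEdges {s(a,b)}).Adj v u' := by
        rw [SimpleGraph.deleteEdges_adj]
        exact ⟨h, by simpa using he⟩
      rcases ih with h1 | h1 | h1
      · exact Or.inl (hK.reachable.trans h1)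
      · exact Or.inr (Or.inl (hK.reachable.trans h1))
      · exact Or.inr (Or.inr (hK.reachable.trans h1))

lemma reach_del (G : SimpleGraph V) (a b : V) (hG : G.Connected) (v : V) :
    (G.deleteEdges {s(a,b)}).Reachable v a ∨ (G.deleteEdges {s(a,b)}).Reachable v b := by
  obtain ⟨w⟩ := hG.preconnected v a
  rcases reach_del_aux G a b w with h | h | h
  · exact Or.inl h
  · exact Or.inl h
  · exact Or.inr h

lemma rot_connected (hG : G.Connected) (hcd' : c ≠ d)
    (h : (G.deleteEdges {s(a,b)}).Reachable a b ∨
         ((G.deleteEdges {s(a,b)}).Reachable a c ∧ (G.deleteEdges {s(a,b)}).Reachable b d) ∨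
         ((G.deleteEdges {s(a,b)}).Reachable a d ∧ (G.deleteEdges {s(a,b)}).Reachable b c)) :
    (rot G a b c d).Connected := by
  set K := G.deleteEdges {s(a,b)} with hK
  have hle : K ≤ rot G a b c d := le_sup_left
  have hmono : ∀ {u v : V}, K.Reachable u v → (rot G a b c d).Reachable u v :=
    fun h => h.mono hle
  have hcdadj : (rot G a b c d).Adj c d := (rot_adj hcd' c d).mpr (Or.inr rfl)
  have habr : (rot G a b c d).Reachable a b := by
    rcases h with h | ⟨h1, h2⟩ | ⟨h1, h2⟩
    · exact hmono h
    · exact ((hmono h1).trans hcdadj.reachable).trans (hmono h2).symm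
    · exact ((hmono h1).trans hcdadj.reachable.symm).trans (hmono h2).symm
  have hall : ∀ v, (rot G a b c d).Reachable v a := by
    intro v
    rcases reach_del G a b hG v with h1 | h1
    · exact hmono h1
    · exact (hmono h1).trans habr.symm
  have : Nonempty V := ⟨a⟩
  exact ⟨fun u v => (hall u).trans (hall v).symm⟩

end Rot

lemma no_dfp (G : SimpleGraph V) (hG : G.Connected)
    (hmax : ∀ H : SimpleGraph V, H.Connected → H.edgeSet.ncard = G.edgeSet.ncard →
      sSup (abs '' spectrum ℝ (H.adjMatrix ℝ)) ≤ sSup (abs '' spectrum ℝ (G.adjMatrix ℝ))) :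
    ¬ DFP G := by
  rintro ⟨u₁, w₁, u₂, w₂, hw, h11, h12, h21, h22, a1, a2, n1, n2⟩
  have hu : u₁ ≠ u₂ := fun h => n1 (h ▸ a2)
  haveI : Nonempty V := ⟨u₁⟩
  obtain ⟨x, hx1, hx0, hxm⟩ := exists_spec_max G
  set K2 := G.deleteEdges {s(u₂,w₂)} with hK2
  set K1 := G.deleteEdges {s(u₁,w₁)} with hK1
  have hsw1 : G.deleteEdges {s(w₁,u₁)} = K1 := by rw [hK1, Sym2.eq_swap]
  have hsw2 : G.deleteEdges {s(w₂,u₂)} = K2 := by rw [hK2, Sym2.eq_swap]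
  have e11 : K2.Adj u₁ w₁ := by
    rw [hK2, SimpleGraph.deleteEdges_adj]
    refine ⟨a1, ?_⟩
    simp only [Set.mem_singleton_iff, Sym2.eq_iff]
    rintro (⟨ha, hb⟩ | ⟨ha, hb⟩)
    · exact hu ha
    · exact h12 ha
  have e22 : K1.Adj u₂ w₂ := by
    rw [hK1, SimpleGraph.deleteEdges_adj]
    refine ⟨a2, ?_⟩
    simp only [Set.mem_singleton_iff, Sym2.eq_iff]
    rintro (⟨ha, hb⟩ | ⟨ha, hb⟩)
    · exact hu ha.symm
    · exact h21 ha
  by_cases hc1 : K2.Reachable u₂ w₂ ∨ K2.Reachable w₂ w₁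
  · by_cases hP : x w₂ ≤ x w₁
    · -- R1 : remove (u₂,w₂), add (u₂,w₁)
      refine rotation_contra G hG hmax x hx1 hx0 hxm a2 n2 h21
        (mul_le_mul_of_nonneg_left hP (hx0 u₂)) (Ne.symm h22) (Ne.symm hw)
        (rot_connected hG h21 ?_)
      rcases hc1 with h | h
      · exact Or.inl h
      · exact Or.inr (Or.inl ⟨SimpleGraph.Reachable.refl _, h⟩)
    · have hP' : x w₁ ≤ x w₂ := le_of_not_ge hP
      by_cases hc2 : K1.Reachable u₁ w₁ ∨ K1.Reachable w₁ w₂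
      · -- R2 : remove (u₁,w₁), add (u₁,w₂)
        refine rotation_contra G hG hmax x hx1 hx0 hxm a1 n1 h12
          (mul_le_mul_of_nonneg_left hP' (hx0 u₁)) (Ne.symm h11) hw
          (rot_connected hG h12 ?_)
        rcases hc2 with h | h
        · exact Or.inl h
        · exact Or.inr (Or.inl ⟨SimpleGraph.Reachable.refl _, h⟩)
      · push_neg at hc2
        obtain ⟨hb1, hb2⟩ := hc2
        have hw2u1 : K1.Reachable w₂ u₁ := by
          rcases reach_del G u₁ w₁ hG w₂ with h | h
          · exact h
          · exact absurd h.symm hb2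
        have hu1u2 : K1.Reachable u₁ u₂ := hw2u1.symm.trans e22.reachable.symm
        have hnw1w2 : ¬ G.Adj w₁ w₂ := by
          intro h
          apply hb2
          refine SimpleGraph.Adj.reachable ?_
          rw [hK1, SimpleGraph.deleteEdges_adj]
          refine ⟨h, ?_⟩
          simp only [Set.mem_singleton_iff, Sym2.eq_iff]
          rintro (⟨ha, hb⟩ | ⟨ha, hb⟩)
          · exact h11 ha.symm
          · exact h12 hb.symm
        by_cases hQ : x u₁ ≤ x u₂
        · -- R3 : remove (w₁,u₁), add (u₂,w₁)
          refine rotation_contra G hG hmax x hx1 hx0 hxm a1.symm n2 h21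
            (by nlinarith [hx0 w₁]) hu h11
            (rot_connected hG h21 ?_)
          rw [hsw1]
          exact Or.inr (Or.inr ⟨SimpleGraph.Reachable.refl _, hu1u2⟩)
        · have hQ' : x u₂ ≤ x u₁ := le_of_not_ge hQ
          by_cases hR : x u₁ ≤ x w₂
          · -- R7 : remove (w₁,u₁), add (w₁,w₂)
            refine rotation_contra G hG hmax x hx1 hx0 hxm a1.symm hnw1w2 hw
              (by nlinarith [hx0 w₁]) h11 h12
              (rot_connected hG hw ?_)
            rw [hsw1]
            exact Or.inr (Or.inl ⟨SimpleGraph.Reachable.refl _, hw2u1.symm⟩)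
          · have hR' : x w₂ ≤ x u₁ := le_of_not_ge hR
            by_cases hbr : K2.Reachable u₂ w₂
            · -- R4 : remove (w₂,u₂), add (u₁,w₂)
              refine rotation_contra G hG hmax x hx1 hx0 hxm a2.symm n1 h12
                (by nlinarith [hx0 w₂]) (Ne.symm hu) h22
                (rot_connected hG h12 ?_)
              rw [hsw2]
              exact Or.inl hbr.symm
            · have hw2w1 : K2.Reachable w₂ w₁ := by
                rcases hc1 with h | h
                · exact absurd h hbr
                · exact h
              have hnu1u2 : ¬ G.Adj u₁ u₂ := by
                intro h
                apply hbr
                have hK : K2.Adj u₁ u₂ := by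
                  rw [hK2, SimpleGraph.deleteEdges_adj]
                  refine ⟨h, ?_⟩
                  simp only [Set.mem_singleton_iff, Sym2.eq_iff]
                  rintro (⟨ha, hb⟩ | ⟨ha, hb⟩)
                  · exact hu ha
                  · exact h12 ha
                exact hK.reachable.symm.trans (e11.reachable.trans hw2w1.symm)
              -- R8 : remove (u₂,w₂), add (u₁,u₂)
              refine rotation_contra G hG hmax x hx1 hx0 hxm a2 hnu1u2 hu
                (by nlinarith [hx0 u₂]) (Ne.symm h12) (Ne.symm h22)
                (rot_connected hG hu ?_)
              exact Or.inr (Or.inr ⟨SimpleGraph.Reachable.refl _,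
                hw2w1.trans e11.reachable.symm⟩)
  · push_neg at hc1
    obtain ⟨hb2r, hbw⟩ := hc1
    have hw1u2 : K2.Reachable w₁ u₂ := by
      rcases reach_del G u₂ w₂ hG w₁ with h | h
      · exact h
      · exact absurd h.symm hbw
    have hu1u2K2 : K2.Reachable u₁ u₂ := e11.reachable.trans hw1u2
    by_cases hQ2 : x u₂ ≤ x u₁
    · -- R4 : remove (w₂,u₂), add (u₁,w₂)
      refine rotation_contra G hG hmax x hx1 hx0 hxm a2.symm n1 h12
        (by nlinarith [hx0 w₂]) (Ne.symm hu) h22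
        (rot_connected hG h12 ?_)
      rw [hsw2]
      exact Or.inr (Or.inr ⟨SimpleGraph.Reachable.refl _, hu1u2K2.symm⟩)
    · have hQ2' : x u₁ ≤ x u₂ := le_of_not_ge hQ2
      by_cases hc2 : K1.Reachable u₁ w₁ ∨ K1.Reachable u₁ u₂
      · -- R3 : remove (w₁,u₁), add (u₂,w₁)
        refine rotation_contra G hG hmax x hx1 hx0 hxm a1.symm n2 h21
          (by nlinarith [hx0 w₁]) hu h11
          (rot_connected hG h21 ?_)
        rw [hsw1]
        rcases hc2 with h | h
        · exact Or.inl h.symm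
        · exact Or.inr (Or.inr ⟨SimpleGraph.Reachable.refl _, h⟩)
      · push_neg at hc2
        obtain ⟨hd1, hd2⟩ := hc2
        have hu2w1K1 : K1.Reachable u₂ w₁ := by
          rcases reach_del G u₁ w₁ hG u₂ with h | h
          · exact absurd h.symm hd2
          · exact h
        have hnu1u2 : ¬ G.Adj u₁ u₂ := by
          intro h
          apply hd2
          refine SimpleGraph.Adj.reachable ?_
          rw [hK1, SimpleGraph.deleteEdges_adj]
          refine ⟨h, ?_⟩
          simp only [Set.mem_singleton_iff, Sym2.eq_iff]
          rintro (⟨ha, hb⟩ | ⟨ha, hb⟩)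
          · exact h21 hb
          · exact h11 ha
        have hnw1w2' : ¬ G.Adj w₁ w₂ := by
          intro h
          apply hbw
          refine SimpleGraph.Reachable.symm (SimpleGraph.Adj.reachable ?_)
          rw [hK2, SimpleGraph.deleteEdges_adj]
          refine ⟨h, ?_⟩
          simp only [Set.mem_singleton_iff, Sym2.eq_iff]
          rintro (⟨ha, hb⟩ | ⟨ha, hb⟩)
          · exact h21 ha.symm
          · exact hw ha
        by_cases hS : x w₁ ≤ x u₂
        · -- R9 : remove (u₁,w₁), add (u₁,u₂)
          refine rotation_contra G hG hmax x hx1 hx0 hxm a1 hnu1u2 hu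
            (mul_le_mul_of_nonneg_left hS (hx0 u₁)) (Ne.symm h11) (Ne.symm h21)
            (rot_connected hG hu ?_)
          exact Or.inr (Or.inl ⟨SimpleGraph.Reachable.refl _, hu2w1K1.symm⟩)
        · have hS' : x u₂ ≤ x w₁ := le_of_not_ge hS
          -- R10 : remove (w₂,u₂), add (w₁,w₂)
          refine rotation_contra G hG hmax x hx1 hx0 hxm a2.symm hnw1w2' hw
            (by nlinarith [hx0 w₂]) h21 h22
            (rot_connected hG hw ?_)
          rw [hsw2]
          exact Or.inr (Or.inr ⟨SimpleGraph.Reachable.refl _, hw1u2.symm⟩)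

end Stmt13Aux

open scoped Classical in
/-- A connected graph maximizing the adjacency spectral radius
among connected graphs with the same numbers of vertices and edges has
`th(G) = n`. -/
theorem stmt13 {V : Type} [Fintype V] [DecidableEq V] (G : SimpleGraph V)
    (hG : G.Connected)
    (hmax : ∀ H : SimpleGraph V, H.Connected → H.edgeSet.ncard = G.edgeSet.ncard →
      sSup (abs '' spectrum ℝ (H.adjMatrix ℝ)) ≤ sSup (abs '' spectrum ℝ (G.adjMatrix ℝ))) :
    zfTh G = Fintype.card V := by
  exact zfTh_eq_card G (no_dfp G hG hmax)

end ThrotPaper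
end

section
/- For a connected graph G, th_+(G) = |V(G)| if and only if G is a complete graph (equivalently, G contains no induced complement of K_2). -/
open SimpleGraph Set Function

namespace ThrotPaper

variable {V : Type*} {W : Type*} {α : Type*}

private lemma no_adj_reachable_eq {X : Type*} {H : SimpleGraph X}
    (h : ∀ a b, ¬ H.Adj a b) {a b : X} (r : H.Reachable a b) : a = b := by
  obtain ⟨p⟩ := r
  cases p with
  | nil => rfl
  | cons ha _ => exact absurd ha (h _ _)

/-- For connected `G`, `th₊(G) = |V(G)|` iff `G` is complete. -/
theorem stmt14 {V : Type*} [Fintype V] (G : SimpleGraph V) (hG : G.Connected) :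
    psdTh G = Fintype.card V ↔ ∀ u v : V, u ≠ v → G.Adj u v := by
  classical
  constructor
  · intro hth
    by_contra hnc
    push_neg at hnc
    obtain ⟨u, v, huv, hadj⟩ := hnc
    set B : Set V := ({u, v} : Set V)ᶜ with hB
    have hmem : ∀ w, w ∉ B → w = u ∨ w = v := by
      intro w hw
      have h' : ¬w = u → w = v := by simpa [hB] using hw
      tauto
    have hnoadj : ∀ a b : (Bᶜ : Set V), ¬ (G.induce Bᶜ).Adj a b := by
      intro a b hab
      have ha : (a : V) = u ∨ (a : V) = v := by
        have := a.2; simpa [hB] using this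
      have hb : (b : V) = u ∨ (b : V) = v := by
        have := b.2; simpa [hB] using this
      have hadj' : G.Adj a.1 b.1 := hab
      rcases ha with ha | ha <;> rcases hb with hb | hb <;> rw [ha, hb] at hadj'
      · exact G.irrefl hadj'
      · exact hadj hadj'
      · exact hadj hadj'.symm
      · exact G.irrefl hadj'
    have hnbr : ∀ w, w ∉ B → ∃ b ∈ B, G.Adj b w := by
      intro w hw
      rcases hmem w hw with rfl | rfl
      · obtain ⟨p⟩ := hG.preconnected w v
        cases p with
        | nil => exact absurd rfl huv
        | @cons _ c _ h q =>
          refine ⟨c, ?_, h.symm⟩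
          simp only [hB, Set.mem_compl_iff, Set.mem_insert_iff, Set.mem_singleton_iff]
          push_neg
          refine ⟨fun hcu => G.irrefl (hcu ▸ h), fun hcv => hadj (hcv ▸ h)⟩
      · obtain ⟨p⟩ := hG.preconnected w u
        cases p with
        | nil => exact absurd rfl huv.symm
        | @cons _ c _ h q =>
          refine ⟨c, ?_, h.symm⟩
          simp only [hB, Set.mem_compl_iff, Set.mem_insert_iff, Set.mem_singleton_iff]
          push_neg
          refine ⟨fun hcu => hadj ((hcu ▸ h).symm), fun hcv => G.irrefl (hcv ▸ h)⟩
    have hstep : psdStep G B = Set.univ := by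
      ext w
      simp only [Set.mem_univ, iff_true, psdStep, Set.mem_union, Set.mem_setOf_eq]
      by_cases hw : w ∈ B
      · exact Or.inl hw
      · obtain ⟨b, hbB, hbw⟩ := hnbr w hw
        refine Or.inr ⟨hw, b, hbB, hbw, ?_⟩
        intro x hx hxB hconn
        obtain ⟨hx', hw', r⟩ := hconn
        exact congrArg Subtype.val (no_adj_reachable_eq hnoadj r)
    have hPSD : IsPSDSet G B := ⟨1, by simpa using hstep⟩
    have hpt : psdPt G B ≤ 1 := Nat.sInf_le (by simpa using hstep)
    have hcard : ({u, v} : Set V).ncard + B.ncard = Fintype.card V := by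
      have := Set.ncard_add_ncard_compl ({u, v} : Set V)
      rwa [Nat.card_eq_fintype_card] at this
    have hpair : ({u, v} : Set V).ncard = 2 := Set.ncard_pair huv
    have hn2 : 2 ≤ Fintype.card V := by omega
    have hle : psdTh G ≤ B.ncard + psdPt G B :=
      Nat.sInf_le ⟨B, hPSD, rfl⟩
    rw [hth] at hle
    omega
  · intro hcomp
    have hmemU : Fintype.card V ∈
        {n | ∃ B : Set V, IsPSDSet G B ∧ n = B.ncard + psdPt G B} := by
      refine ⟨Set.univ, ⟨0, by simp⟩, ?_⟩
      have h0 : psdPt G (Set.univ : Set V) = 0 :=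
        Nat.sInf_eq_zero.mpr (Or.inl (by simp))
      simp [h0, Set.ncard_univ, Nat.card_eq_fintype_card]
    refine le_antisymm (Nat.sInf_le hmemU) (le_csInf ⟨_, hmemU⟩ ?_)
    rintro m ⟨B, ⟨t, ht⟩, rfl⟩
    by_cases h2 : 2 ≤ (Bᶜ).ncard
    · exfalso
      have hfix : psdStep G B = B := by
        apply Set.Subset.antisymm _ Set.subset_union_left
        rintro w (hw | ⟨hw, u, huB, huw, hcond⟩)
        · exact hw
        · exfalso
          obtain ⟨x, hxBc, hxw⟩ := Set.exists_ne_of_one_lt_ncard h2 w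
          have hxB : x ∉ B := hxBc
          have hux : G.Adj u x := hcomp u x (fun h => hxB (h ▸ huB))
          have hwBc : w ∈ Bᶜ := hw
          have hconn : whiteConn G B x w := by
            refine ⟨hxBc, hwBc, ?_⟩
            exact SimpleGraph.Adj.reachable
              (show (G.induce Bᶜ).Adj ⟨x, hxBc⟩ ⟨w, hwBc⟩ from hcomp x w hxw)
          exact hxw (hcond x hux hxB hconn)
      have hiter : (psdStep G)^[t] B = B := Function.iterate_fixed hfix t
      rw [ht] at hiter
      obtain ⟨x, hx⟩ := Set.nonempty_of_ncard_ne_zero (s := Bᶜ) (by omega)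
      exact hx (hiter ▸ Set.mem_univ x)
    · have hsum : B.ncard + (Bᶜ).ncard = Fintype.card V := by
        have := Set.ncard_add_ncard_compl B
        rwa [Nat.card_eq_fintype_card] at this
      by_cases hc : Bᶜ = ∅
      · have hB : B = Set.univ := by
          rw [← Set.compl_empty, ← hc, compl_compl]
        rw [hB, Set.ncard_univ, Nat.card_eq_fintype_card]
        omega
      · have hc1 : 1 ≤ (Bᶜ).ncard := by
          rcases Set.nonempty_iff_ne_empty.mpr hc with ⟨x, hx⟩
          exact (Set.ncard_pos (Set.toFinite _)).mpr ⟨x, hx⟩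
        have hBne : B ≠ Set.univ := by
          intro h
          rcases Set.nonempty_iff_ne_empty.mpr hc with ⟨x, hx⟩
          exact hx (h ▸ Set.mem_univ x)
        have hpt1 : 1 ≤ psdPt G B := by
          rcases Nat.eq_zero_or_pos (psdPt G B) with h0 | h; swap
          · exact h
          rcases Nat.sInf_eq_zero.mp h0 with h | h
          · exact absurd (by simpa using h) hBne
          · exact absurd (Set.eq_empty_iff_forall_notMem.mp h t (by simpa using ht)) not_false
        omega

end ThrotPaper
end

section
/- Let G be a graph, B a PSD zero forcing set of G, and F a set of PSD forces of B with pt_+(G;F) = pt_+(G;B). Then contracting any edge belonging to a forcing tree of F yields a graph in which the PSD propagation time of (the image of) F is at most pt_+(G;F). -/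
open SimpleGraph Set Function

namespace ThrotPaper

variable {V : Type*} {W : Type*} {α : Type*}

section Aux

variable {V' W' : Type*}

lemma psdBlueAt_subset_succ (G : SimpleGraph V') (F : Set (V' × V')) (B : Set V') (t : ℕ) :
    psdBlueAt G F B t ⊆ psdBlueAt G F B (t + 1) := fun _ hx => Or.inl hx

lemma psdBlueAt_mono (G : SimpleGraph V') (F : Set (V' × V')) (B : Set V') {s t : ℕ}
    (h : s ≤ t) : psdBlueAt G F B s ⊆ psdBlueAt G F B t := by
  induction t with
  | zero => simp_all [Nat.le_zero.mp h]
  | succ n ih =>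
    rcases Nat.lt_or_ge s (n + 1) with h' | h'
    · exact (ih (Nat.lt_succ_iff.mp h')).trans (psdBlueAt_subset_succ G F B n)
    · have : s = n + 1 := le_antisymm h h'
      subst this; exact Set.Subset.rfl

lemma whiteConn_adj {G : SimpleGraph V'} {B : Set V'} {x y : V'} (h : G.Adj x y)
    (hx : x ∉ B) (hy : y ∉ B) : whiteConn G B x y :=
  ⟨hx, hy, SimpleGraph.Adj.reachable (by exact h)⟩

lemma whiteConn_symm {G : SimpleGraph V'} {B : Set V'} {x y : V'}
    (h : whiteConn G B x y) : whiteConn G B y x := by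
  obtain ⟨hx, hy, hr⟩ := h
  exact ⟨hy, hx, hr.symm⟩

lemma whiteConn_trans {G : SimpleGraph V'} {B : Set V'} {x y z : V'}
    (h1 : whiteConn G B x y) (h2 : whiteConn G B y z) : whiteConn G B x z := by
  obtain ⟨hx, hy, hr1⟩ := h1
  obtain ⟨hy', hz, hr2⟩ := h2
  exact ⟨hx, hz, hr1.trans hr2⟩

lemma whiteConn_antitone {G : SimpleGraph V'} {B₁ B₂ : Set V'} (h : B₁ ⊆ B₂) {x y : V'}
    (hw : whiteConn G B₂ x y) : whiteConn G B₁ x y := by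
  obtain ⟨hx, hy, hr⟩ := hw
  have hsub : B₂ᶜ ⊆ B₁ᶜ := Set.compl_subset_compl.mpr h
  refine ⟨hsub hx, hsub hy, ?_⟩
  obtain ⟨wlk⟩ := hr
  have key : ∀ (a b : ↥(B₂ᶜ)), (G.induce B₂ᶜ).Walk a b →
      (G.induce B₁ᶜ).Reachable ⟨a.1, hsub a.2⟩ ⟨b.1, hsub b.2⟩ := by
    intro a b w
    induction w with
    | nil => exact Reachable.refl _
    | @cons a c b hac w ih =>
      have h1 : (G.induce B₁ᶜ).Adj ⟨a.1, hsub a.2⟩ ⟨c.1, hsub c.2⟩ := hac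
      exact h1.reachable.trans ih
  exact key _ _ wlk

/-- Every vertex outside `B` that is blue at time `t` was forced by some `c ∈ F` at an
earlier time, with the PSD forcing condition holding at that time. -/
lemma exists_forcer (G : SimpleGraph V') (F : Set (V' × V')) (B : Set V') {t : ℕ} {y : V'}
    (hy : y ∈ psdBlueAt G F B t) (hyB : y ∉ B) :
    ∃ s < t, ∃ c ∈ psdBlueAt G F B s, (c, y) ∈ F ∧ G.Adj c y ∧ y ∉ psdBlueAt G F B s ∧
      ∀ x, G.Adj c x → x ∉ psdBlueAt G F B s → whiteConn G (psdBlueAt G F B s) x y → x = y := by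
  induction t with
  | zero => exact absurd hy hyB
  | succ n ih =>
    by_cases h : y ∈ psdBlueAt G F B n
    · obtain ⟨s, hs, rest⟩ := ih h
      exact ⟨s, hs.trans (Nat.lt_succ_self n), rest⟩
    · rcases hy with h' | h'
      · exact absurd h' h
      · obtain ⟨-, c, hcs, hcF, hadj, hcond⟩ := h'
        exact ⟨n, Nat.lt_succ_self n, c, hcs, hcF, hadj, h, hcond⟩

/-- White connectivity in the contracted graph lifts back to white connectivity in `G`. -/
lemma lift_whiteConn {G : SimpleGraph V'} {G' : SimpleGraph W'} {φ : V' → W'} {u v : V'}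
    (hc : IsEdgeContraction G u v G' φ) (hadj : G.Adj u v)
    {Bt : Set V'} {Bt' : Set W'} (him : φ '' Bt ⊆ Bt')
    {x y : V'} (hx : x ∉ Bt) (hy : y ∉ Bt)
    (h : whiteConn G' Bt' (φ x) (φ y)) : whiteConn G Bt x y := by
  have white_of : ∀ z : V', φ z ∉ Bt' → z ∉ Bt := fun z hz hzB => hz (him ⟨z, hzB, rfl⟩)
  have step : ∀ x y : V', x ∉ Bt → y ∉ Bt → φ x = φ y → whiteConn G Bt x y := by
    intro x y hx hy hxy
    rcases eq_or_ne x y with rfl | hne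
    · exact ⟨hx, hx, Reachable.refl _⟩
    · rcases hc.2.2.1 x y hxy hne with ⟨rfl, rfl⟩ | ⟨rfl, rfl⟩
      · exact whiteConn_adj hadj hx hy
      · exact whiteConn_adj hadj.symm hx hy
  obtain ⟨hx', hy', ⟨wlk⟩⟩ := h
  suffices key : ∀ (a b : ↥(Bt'ᶜ)) (w : (G'.induce Bt'ᶜ).Walk a b) (x y : V'),
      φ x = a.1 → φ y = b.1 → x ∉ Bt → y ∉ Bt → whiteConn G Bt x y by
    exact key _ _ wlk x y rfl rfl hx hy
  intro a b w
  induction w with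
  | nil =>
    intro x y hxa hyb hx hy
    exact step x y hx hy (hxa.trans hyb.symm)
  | @cons a c b hac w ih =>
    intro x y hxa hyb hx hy
    have hadjac : G'.Adj a.1 c.1 := hac
    obtain ⟨x₁, y₁, hx₁y₁, hφx₁, hφy₁⟩ := ((hc.2.2.2 a.1 c.1).mp hadjac).2
    have hx₁ : x₁ ∉ Bt := white_of x₁ (by rw [hφx₁]; exact a.2)
    have hy₁ : y₁ ∉ Bt := white_of y₁ (by rw [hφy₁]; exact c.2)
    exact whiteConn_trans
      (whiteConn_trans (step x x₁ hx hx₁ (hxa.trans hφx₁.symm))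
        (whiteConn_adj hx₁y₁ hx₁ hy₁))
      (ih y₁ y hφy₁ hyb hy₁ hy)

/-- Interference case A: the forcer `α` of the contracted edge `(α,β) ∈ F` is performing a
force on `y`, and some white `q` adjacent to `β` lies in `y`'s white component. -/
lemma caseA {G : SimpleGraph V'} {F : Set (V' × V')} {B : Set V'} {t : ℕ} {α β y q : V'}
    (hαβF : (α, β) ∈ F)
    (hF2 : ∀ p ∈ F, p.2 ∉ B ∧ p.1 ≠ p.2)
    (hF1 : ∀ w ∉ B, ∃! u, (u, w) ∈ F)
    (hadjαβ : G.Adj α β)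
    (hy : y ∉ psdBlueAt G F B t)
    (hadjαy : G.Adj α y)
    (cond : ∀ x, G.Adj α x → x ∉ psdBlueAt G F B t →
      whiteConn G (psdBlueAt G F B t) x y → x = y)
    (hq : q ∉ psdBlueAt G F B t) (hadjβq : G.Adj β q)
    (hqy : whiteConn G (psdBlueAt G F B t) q y)
    (hyβ : y ≠ β) : False := by
  have hβB : β ∉ B := (hF2 _ hαβF).1
  by_cases hβt : β ∈ psdBlueAt G F B t
  · obtain ⟨s, hst, c, hcs, hcF, hadjcβ, hβs, conds⟩ := exists_forcer G F B hβt hβB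
    have hcα : c = α := by
      obtain ⟨c', -, huniq⟩ := hF1 β hβB
      exact (huniq c hcF).trans (huniq α hαβF).symm
    subst hcα
    have hmono := psdBlueAt_mono G F B hst.le
    have hqs : q ∉ psdBlueAt G F B s := fun h => hq (hmono h)
    have hys : y ∉ psdBlueAt G F B s := fun h => hy (hmono h)
    have hyβconn : whiteConn G (psdBlueAt G F B s) y β :=
      whiteConn_trans (whiteConn_symm (whiteConn_antitone hmono hqy))
        (whiteConn_symm (whiteConn_adj hadjβq hβs hqs))
    exact hyβ (conds y hadjαy hys hyβconn)
  · have hβy : whiteConn G (psdBlueAt G F B t) β y :=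
      whiteConn_trans (whiteConn_adj hadjβq hβt hq) hqy
    exact hyβ ((cond β hadjαβ hβt hβy).symm)

/-- Interference case B: the forced endpoint `β` of the contracted edge `(α,β) ∈ F` is blue
and performing a force on `y`, and some white `q` adjacent to `α` lies in `y`'s component. -/
lemma caseB {G : SimpleGraph V'} {F : Set (V' × V')} {B : Set V'} {t : ℕ} {α β y q : V'}
    (hαβF : (α, β) ∈ F)
    (hF2 : ∀ p ∈ F, p.2 ∉ B ∧ p.1 ≠ p.2)
    (hF1 : ∀ w ∉ B, ∃! u, (u, w) ∈ F)
    (hβt : β ∈ psdBlueAt G F B t)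
    (hy : y ∉ psdBlueAt G F B t)
    (hadjβy : G.Adj β y)
    (hq : q ∉ psdBlueAt G F B t) (hadjαq : G.Adj α q)
    (hqy : whiteConn G (psdBlueAt G F B t) q y) : False := by
  have hβB : β ∉ B := (hF2 _ hαβF).1
  obtain ⟨s, hst, c, hcs, hcF, hadjcβ, hβs, conds⟩ := exists_forcer G F B hβt hβB
  have hcα : c = α := by
    obtain ⟨c', -, huniq⟩ := hF1 β hβB
    exact (huniq c hcF).trans (huniq α hαβF).symm
  subst hcα
  have hmono := psdBlueAt_mono G F B hst.le
  have hqs : q ∉ psdBlueAt G F B s := fun h => hq (hmono h)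
  have hys : y ∉ psdBlueAt G F B s := fun h => hy (hmono h)
  have hqβ : whiteConn G (psdBlueAt G F B s) q β :=
    whiteConn_trans (whiteConn_antitone hmono hqy)
      (whiteConn_symm (whiteConn_adj hadjβy hβs hys))
  exact hq ((conds q hadjαq hqs hqβ) ▸ hβt)

end Aux

/-- Contracting an edge of a forcing tree of an optimal set of
PSD forces does not increase the PSD propagation time of (the image of) `F`. -/
theorem stmt17 {V W : Type*} [Fintype V] [Fintype W] (G : SimpleGraph V)
    (B : Set V) (F : Set (V × V)) (hF : IsPSDForceSet G F B)
    (hopt : psdPtF G F B = psdPt G B)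
    (u v : V) (hadj : G.Adj u v) (htree : (u, v) ∈ F ∨ (v, u) ∈ F)
    (G' : SimpleGraph W) (φ : V → W) (hc : IsEdgeContraction G u v G' φ) :
    psdPtF G' {p : W × W | p.1 ≠ p.2 ∧ ∃ q ∈ F, φ q.1 = p.1 ∧ φ q.2 = p.2} (φ '' B) ≤
      psdPtF G F B := by
  classical
  obtain ⟨hF1, hF2, T0, hT0⟩ := hF
  set F' : Set (W × W) := {p : W × W | p.1 ≠ p.2 ∧ ∃ q ∈ F, φ q.1 = p.1 ∧ φ q.2 = p.2}
    with hF'def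
  obtain ⟨hsurj, hφuv, hid, hadjiff⟩ := hc
  have hc' : IsEdgeContraction G u v G' φ := ⟨hsurj, hφuv, hid, hadjiff⟩
  have hmain : ∀ t, φ '' psdBlueAt G F B t ⊆ psdBlueAt G' F' (φ '' B) t := by
    intro t
    induction t with
    | zero => exact Set.Subset.rfl
    | succ t ih =>
      rintro _ ⟨y, hy, rfl⟩
      rcases hy with hy | hy
      · exact Or.inl (ih ⟨y, hy, rfl⟩)
      obtain ⟨hyw, u₀, hu₀, hu₀F, hadj₀, cond⟩ := hy
      by_cases hφy : φ y ∈ psdBlueAt G' F' (φ '' B) t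
      · exact Or.inl hφy
      right
      have hφu₀ : φ u₀ ∈ psdBlueAt G' F' (φ '' B) t := ih ⟨u₀, hu₀, rfl⟩
      have hneq : φ u₀ ≠ φ y := fun h => hφy (h ▸ hφu₀)
      refine ⟨hφy, φ u₀, hφu₀, ⟨hneq, (u₀, y), hu₀F, rfl, rfl⟩,
        (hadjiff _ _).mpr ⟨hneq, u₀, y, hadj₀, rfl, rfl⟩, ?_⟩
      intro x' hadjx' hx'B hwc
      obtain ⟨hne', p, q, hpq, hφp, hφq⟩ := (hadjiff _ _).mp hadjx'
      have hq : q ∉ psdBlueAt G F B t := fun h => hx'B (hφq ▸ ih ⟨q, h, rfl⟩)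
      have hqy : whiteConn G (psdBlueAt G F B t) q y := by
        refine lift_whiteConn hc' hadj ih hq hyw ?_
        rw [hφq]; exact hwc
      by_cases hpu : p = u₀
      · subst hpu
        rw [← hφq, cond q hpq hq hqy]
      · exfalso
        rcases hid p u₀ hφp hpu with ⟨rfl, rfl⟩ | ⟨rfl, rfl⟩
        · -- p = u, u₀ = v (so htree is about (p, u₀))
          rcases htree with hT | hT
          · exact caseB hT hF2 hF1 hu₀ hyw hadj₀ hq hpq hqy
          · have hyp : y ≠ p := fun h => hφy (by rw [h, hφuv]; exact hφu₀)
            exact caseA hT hF2 hF1 hadj.symm hyw hadj₀ cond hq hpq hqy hyp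
        · -- p = v, u₀ = u (so htree is about (u₀, p))
          rcases htree with hT | hT
          · have hyp : y ≠ p := fun h => hφy (by rw [h, ← hφuv]; exact hφu₀)
            exact caseA hT hF2 hF1 hadj hyw hadj₀ cond hq hpq hqy hyp
          · exact caseB hT hF2 hF1 hu₀ hyw hadj₀ hq hpq hqy
  have hne : {t | psdBlueAt G F B t = Set.univ}.Nonempty := ⟨T0, hT0⟩
  have hmem : psdBlueAt G F B (psdPtF G F B) = Set.univ := Nat.sInf_mem hne
  have hfin : psdBlueAt G' F' (φ '' B) (psdPtF G F B) = Set.univ := by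
    apply Set.eq_univ_of_univ_subset
    intro w _
    obtain ⟨x, rfl⟩ := hsurj w
    exact hmain _ ⟨x, by rw [hmem]; trivial, rfl⟩
  exact Nat.sInf_le hfin

end ThrotPaper
end
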